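/- arXiv:1011.6676 — 5 statements merged into one kernel-verified Lean document; each statement's English description precedes it below -/
import Mathlib

section
/- Let p be an odd prime, let λ be an integer, and let d ∈ {0,1,...,(p-1)/2}. Define a_p^{(d)}(λ) = Σ_{x=0}^{p-1} x^d · ((x(x-1)(x-λ))/p), where (·/p) is the Legendre symbol. Then a_p^{(d)}(λ) ≡ (-1)^{(p+1)/2} · λ^d · 4^{-d} · Σ_{k=0}^{(p-1)/2} C(2k,k)·C(2(k+d),k+d)·λ^k·16^{-k} − δ_{d,(p-1)/2} (mod p), where δ_{d,(p-1)/2} equals 1 if d = (p-1)/2 and 0 otherwise. -/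
/-!
By Euler's criterion `(a/p) = a ^ m` in `ZMod p`, where `p = 2m + 1`, so `a_p^{(d)}(λ)` is the sum
of the values over `ZMod p` of `f = X^d (X (X - 1) (X - λ))^m`. Since `∑_y y^n` is `-1` when `n` is
a positive multiple of `p - 1` and `0` otherwise, and `deg f ≤ 4m`, that sum is minus the sum of
the coefficients of `X^{2m}` and `X^{4m}` in `f`. The second one is the `δ` term; the first one is
a convolution of binomial coefficients, which becomes the right-hand side through the congruence
`C(2k, k) ≡ (-4)^k C(m, k) (mod p)`.
-/

open Finset Polynomial

section FiniteField

variable {K : Type*} [Field K] [Fintype K]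

theorem FiniteField.sum_pow_of_ne_zero {n : ℕ} (hn : n ≠ 0) :
    ∑ x : K, x ^ n = if Fintype.card K - 1 ∣ n then -1 else 0 := by
  classical
  rw [← FiniteField.sum_pow_units, Fintype.sum_eq_add_sum_compl 0, zero_pow hn, zero_add,
    Finset.sum_subtype _ (p := (· ≠ 0)) (by simp)]
  exact Fintype.sum_equiv unitsEquivNeZero.symm _ _ fun _ => rfl

theorem FiniteField.sum_eval_of_natDegree_le {f : K[X]}
    (hf : f.natDegree ≤ 2 * (Fintype.card K - 1)) :
    ∑ x, f.eval x = -(f.coeff (Fintype.card K - 1) + f.coeff (2 * (Fintype.card K - 1))) := by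
  set q := Fintype.card K
  have hq : 1 ≤ q - 1 := Nat.le_sub_of_add_le (Fintype.one_lt_card (α := K))
  have hzero : ∀ n ≤ 2 * (q - 1), n ≠ q - 1 → n ≠ 2 * (q - 1) → ∑ x : K, x ^ n = 0 := by
    intro n hn h₁ h₂
    rcases Nat.eq_zero_or_pos n with rfl | hpos
    · exact FiniteField.sum_pow_lt_card_sub_one K 0 hq
    rw [FiniteField.sum_pow_of_ne_zero hpos.ne', if_neg]
    rintro ⟨t, rfl⟩
    have : t < 3 := by nlinarith
    interval_cases t <;> omega
  have hneg_one : ∀ t, 0 < t → ∑ x : K, x ^ (t * (q - 1)) = -1 := fun t ht => by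
    rw [FiniteField.sum_pow_of_ne_zero (by positivity), if_pos (dvd_mul_left _ _)]
  simp_rw [eval_eq_sum_range' (Nat.lt_succ_of_le hf)]
  rw [Finset.sum_comm, Finset.sum_eq_add (q - 1) (2 * (q - 1)) (by omega)]
  · rw [← mul_sum, ← mul_sum, ← one_mul (q - 1), hneg_one 1 one_pos, one_mul, hneg_one 2 two_pos]
    ring
  · intro n hn hne
    rw [← mul_sum, hzero n (Nat.lt_succ_iff.mp (mem_range.mp hn)) hne.1 hne.2, mul_zero]
  · exact fun h => absurd (mem_range.mpr (by omega)) h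
  · exact fun h => absurd (mem_range.mpr (by omega)) h

end FiniteField

theorem ZMod.sum_range_natCast {n : ℕ} [NeZero n] {M : Type*} [AddCommMonoid M]
    (f : ZMod n → M) : ∑ x ∈ range n, f x = ∑ x, f x :=
  sum_nbij' Nat.cast ZMod.val (fun _ _ => mem_univ _) (fun x _ => mem_range.mpr x.val_lt)
    (fun _ hx => ZMod.val_cast_of_lt (mem_range.mp hx)) (fun x _ => ZMod.natCast_zmod_val x)
    (fun _ _ => rfl)

theorem cast_sum_pow_mul_legendreSym_eval (p : ℕ) [Fact p.Prime] (f : ℤ[X]) (d : ℕ) :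
    ((∑ x ∈ range p, (x : ℤ) ^ d * legendreSym p (f.eval (x : ℤ)) : ℤ) : ZMod p) =
      ∑ y : ZMod p, (X ^ d * (f.map (Int.castRingHom (ZMod p))) ^ (p / 2)).eval y := by
  rw [Int.cast_sum, ← ZMod.sum_range_natCast]
  refine sum_congr rfl fun x _ => ?_
  simp [legendreSym.eq_pow]

theorem ZMod.choose_two_mul_eq_neg_four_pow_mul_choose {p m : ℕ} [Fact p.Prime]
    (hp : p = 2 * m + 1) {k : ℕ} (hk : k < p) :
    ((2 * k).choose k : ZMod p) = (-4) ^ k * m.choose k := by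
  induction k with
  | zero => simp
  | succ k ih =>
    have hunit : ((k + 1 : ℕ) : ZMod p) ≠ 0 := by
      rw [Ne, ZMod.natCast_eq_zero_iff]
      exact fun h => absurd (Nat.le_of_dvd k.succ_pos h) (by omega)
    have hcentral : ((2 * (k + 1)).choose (k + 1) * (k + 1) : ZMod p) =
        2 * (2 * k + 1) * (2 * k).choose k := by
      have := congrArg (Nat.cast : ℕ → ZMod p) (Nat.succ_mul_centralBinom_succ k)
      simp only [Nat.centralBinom_eq_two_mul_choose] at this
      push_cast at this
      linear_combination this
    -- `-4 (m - k) = 2 (2k + 1)` in `ZMod p`, because `2m + 1 = 0` there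
    have hchoose : (m.choose (k + 1) * (k + 1) : ZMod p) * -4 =
        2 * (2 * k + 1) * m.choose k := by
      rcases le_or_gt k m with hkm | hkm
      · have hm : ((2 * m + 1 : ℕ) : ZMod p) = 0 := by rw [← hp, ZMod.natCast_self]
        have := congrArg (Nat.cast : ℕ → ZMod p) (Nat.choose_succ_right_eq m k)
        push_cast [hkm] at this hm
        linear_combination -4 * this - 2 * m.choose k * hm
      · simp [Nat.choose_eq_zero_of_lt hkm, Nat.choose_eq_zero_of_lt (Nat.lt_succ_of_lt hkm)]
    apply mul_right_cancel₀ hunit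
    push_cast at hunit ⊢
    rw [hcentral, ih (by omega)]
    linear_combination -(-4) ^ k * hchoose

theorem ZMod.sum_choose_two_mul_eq_sum_choose_mul_choose {p m : ℕ} [Fact p.Prime]
    (hp : p = 2 * m + 1) (a : ZMod p) {d : ℕ} (hd : d ≤ m) :
    a ^ d * 4⁻¹ ^ d * ∑ k ∈ range (m + 1),
        ((2 * k).choose k : ZMod p) * (2 * (k + d)).choose (k + d) * a ^ k * 16⁻¹ ^ k =
      (-1) ^ d * ∑ k ∈ range (m + 1), (m.choose k * m.choose (k + d) : ZMod p) * a ^ (k + d) := by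
  have h2 : (2 : ZMod p) ≠ 0 := Ring.two_ne_zero (by rw [ZMod.ringChar_zmod_n]; omega)
  have h4 : (-4 : ZMod p) * 4⁻¹ = -1 := by
    rw [neg_mul, mul_inv_cancel₀ (by simpa [show (4 : ZMod p) = 2 ^ 2 by norm_num] using h2)]
  have h16 : (-4 : ZMod p) * (-4) * 16⁻¹ = 1 := by
    rw [show (-4 : ZMod p) * (-4) = 16 by norm_num,
      mul_inv_cancel₀ (by simpa [show (16 : ZMod p) = 2 ^ 4 by norm_num] using h2)]
  rw [mul_sum, mul_sum]
  refine sum_congr rfl fun k hk => ?_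
  rw [mem_range] at hk
  rw [ZMod.choose_two_mul_eq_neg_four_pow_mul_choose hp (by omega),
    ZMod.choose_two_mul_eq_neg_four_pow_mul_choose hp (by omega)]
  calc _ = ((-4) * (-4) * 16⁻¹) ^ k * ((-4) * 4⁻¹) ^ d *
        ((m.choose k * m.choose (k + d) : ZMod p) * a ^ (k + d)) := by
        rw [mul_pow, mul_pow, mul_pow, pow_add, pow_add]; ring
    _ = _ := by rw [h16, h4, one_pow, one_mul]

section LegendreCubic

variable {R : Type*} [CommRing R]

noncomputable def legendreCubic (a : R) : R[X] := X * (X - 1) * (X - C a)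

@[simp]
theorem eval_legendreCubic (a x : R) : (legendreCubic a).eval x = x * (x - 1) * (x - a) := by
  simp [legendreCubic]

@[simp]
theorem map_legendreCubic {S : Type*} [CommRing S] (f : R →+* S) (a : R) :
    (legendreCubic a).map f = legendreCubic (f a) := by
  simp [legendreCubic]

theorem monic_legendreCubic (a : R) : (legendreCubic a).Monic := by
  unfold legendreCubic; monicity!

theorem natDegree_legendreCubic [Nontrivial R] (a : R) : (legendreCubic a).natDegree = 3 := by
  unfold legendreCubic; compute_degree!

theorem natDegree_X_pow_mul_legendreCubic_pow [Nontrivial R] (a : R) (d m : ℕ) :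
    (X ^ d * legendreCubic a ^ m).natDegree = d + 3 * m := by
  rw [(monic_X_pow d).natDegree_mul ((monic_legendreCubic a).pow m), natDegree_X_pow,
    (monic_legendreCubic a).natDegree_pow, natDegree_legendreCubic, mul_comm]

theorem coeff_X_pow_mul_legendreCubic_pow_four_mul {d m : ℕ} (hd : d ≤ m) (a : R) :
    (X ^ d * legendreCubic a ^ m).coeff (4 * m) = if d = m then 1 else 0 := by
  nontriviality R
  have hdeg := natDegree_X_pow_mul_legendreCubic_pow a d m
  split_ifs with h
  · subst h
    rw [← ((monic_X_pow d).mul ((monic_legendreCubic a).pow d)).coeff_natDegree, hdeg]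
    ring_nf
  · exact coeff_eq_zero_of_natDegree_lt (by omega)

theorem coeff_X_pow_mul_legendreCubic_pow_two_mul (a : R) (d m : ℕ) :
    (X ^ d * legendreCubic a ^ m).coeff (2 * m) =
      (-1) ^ (m + d) * ∑ k ∈ range (m + 1), (m.choose k * m.choose (k + d) : R) * a ^ (k + d) := by
  have hfactor : X ^ d * legendreCubic a ^ m =
      X ^ (d + m) * ((X + C (-1)) ^ m * (X + C (-a)) ^ m) := by
    simp only [legendreCubic, mul_pow, pow_add, C_neg, C_1, ← sub_eq_add_neg]
    ring
  rw [hfactor, coeff_X_pow_mul', coeff_mul, Nat.sum_antidiagonal_eq_sum_range_succ_mk]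
  simp only [coeff_X_add_C_pow]
  split_ifs with hd
  · have hsub : range (m - d + 1) ⊆ range (m + 1) := range_subset_range.mpr (by omega)
    rw [show 2 * m - (d + m) = m - d by omega, ← sum_subset hsub, mul_sum]
    · refine sum_congr rfl fun k hk => ?_
      rw [mem_range] at hk
      obtain ⟨j, rfl⟩ : ∃ j, m = k + d + j := ⟨m - d - k, by omega⟩
      rw [show k + d + j - k = d + j by omega,
        show k + d + j - (k + d + j - d - k) = k + d by omega,
        Nat.choose_symm_of_eq_add (show k + d + j = k + d + j - d - k + (k + d) by omega),
        neg_pow a]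
      ring
    · intro k _ hk
      rw [Nat.choose_eq_zero_of_lt (show m < k + d by rw [mem_range] at hk; omega)]
      simp
  · refine (mul_eq_zero_of_right _ (sum_eq_zero fun k _ => ?_)).symm
    rw [Nat.choose_eq_zero_of_lt (show m < k + d by omega)]
    simp

end LegendreCubic

/-- Theorem 1.1: for an odd prime `p`, an integer `λ` and `d ∈ {0, ..., (p-1)/2}`,
`a_p^{(d)}(λ) ≡ (-1)^{(p+1)/2} (λ/4)^d ∑_{k=0}^{(p-1)/2} C(2k,k) C(2(k+d),k+d) λ^k / 16^k
  - δ_{d,(p-1)/2} (mod p)`. -/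
theorem stmt_0 (p : ℕ) [Fact p.Prime] (hodd : Odd p) (lam : ℤ) (d : ℕ)
    (hd : d ≤ (p - 1) / 2) :
    ((∑ x ∈ Finset.range p, (x : ℤ) ^ d *
        legendreSym p ((x : ℤ) * ((x : ℤ) - 1) * ((x : ℤ) - lam)) : ℤ) : ZMod p) =
      (-1 : ZMod p) ^ ((p + 1) / 2) * (lam : ZMod p) ^ d * ((4 : ZMod p)⁻¹) ^ d *
          (∑ k ∈ Finset.range ((p - 1) / 2 + 1),
            (Nat.choose (2 * k) k : ZMod p) * (Nat.choose (2 * (k + d)) (k + d) : ZMod p) *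
              (lam : ZMod p) ^ k * ((16 : ZMod p)⁻¹) ^ k) -
        (if d = (p - 1) / 2 then 1 else 0) := by
  set m := (p - 1) / 2
  have hp : p = 2 * m + 1 := by obtain ⟨t, ht⟩ := hodd; omega
  simp_rw [← eval_legendreCubic]
  rw [cast_sum_pow_mul_legendreSym_eval, map_legendreCubic, eq_intCast,
    FiniteField.sum_eval_of_natDegree_le, ZMod.card, show p / 2 = m by omega,
    show p - 1 = 2 * m by omega, show 2 * (2 * m) = 4 * m by ring,
    coeff_X_pow_mul_legendreCubic_pow_two_mul, coeff_X_pow_mul_legendreCubic_pow_four_mul hd,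
    show (p + 1) / 2 = m + 1 by omega]
  · linear_combination
      -(-1) ^ (m + 1) * ZMod.sum_choose_two_mul_eq_sum_choose_mul_choose hp (lam : ZMod p) hd
  · rw [ZMod.card, natDegree_X_pow_mul_legendreCubic_pow]
    omega
end

section
/- Let p > 3 be a prime and let d ∈ {0,1,...,(p-1)/2}. Then Σ_{k=0}^{(p-1)/2} C(2k,k)·C(2k+2d,k+d)·16^{-k} ≡ 4^d · (-1/p) (mod p²), where (-1/p) is the Legendre symbol of -1 modulo p. -/
/-!
Write `p = 2m + 1` and `S(d, j) = ∑_{k ≤ m} C(2k,k) C(2k+2d, k+d+j) / 16^k`. For `d = 0` the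
terms form a WZ pair in `(k, j)`, so `(2j+1) (S(0, j+1) - S(0, j))` telescopes to a boundary term
divisible by `p²` when `j < m`. Hence `S(0, j) ≡ S(0, m) = C(2m,m) / 16^m` for all `j ≤ m`, and
this is `(-1)^m` by Morley's congruence `C(2m,m) ≡ (-1)^m 4^(p-1) (mod p²)`. Pascal's rule gives
`S(d+1, j+1) = S(d, j) + 2 S(d, j+1) + S(d, j+2)` (and a symmetric form at `j = 0`), so induction
on `d` yields `S(d, j) ≡ 4^d (-1)^m` whenever `d + j ≤ m`; finally `(-1/p) = (-1)^m`.
-/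

open Finset Nat

namespace CentralBinomSum

lemma succ_mul_choose_succ_int (n r : ℕ) :
    ((r : ℤ) + 1) * n.choose (r + 1) = ((n : ℤ) - r) * n.choose r := by
  have hmul : ((n : ℤ) + 1) * n.choose r = (n + 1).choose (r + 1) * ((r : ℤ) + 1) := by
    exact_mod_cast Nat.add_one_mul_choose_eq n r
  rw [Nat.choose_succ_succ', Nat.cast_add] at hmul
  linear_combination -hmul

lemma choose_two_mul_add_two_succ (n : ℕ) :
    (2 * n + 2).choose (n + 1) = 2 * (2 * n).choose n + 2 * (2 * n).choose (n + 1) := by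
  rw [Nat.choose_succ_succ', ← Nat.choose_symm_half, Nat.choose_succ_succ']
  ring

lemma choose_add_two_add_two (n r : ℕ) :
    (n + 2).choose (r + 2) = n.choose r + 2 * n.choose (r + 1) + n.choose (r + 2) := by
  rw [Nat.choose_succ_succ', Nat.choose_succ_succ', Nat.choose_succ_succ']
  ring

/-- With `F(k, j) = C(2k,k) C(2k,k+j) / 16^k` and `G(k, j) = 4 (k - j) F(k, j)`, this is
`(2j+1) (F(k, j+1) - F(k, j)) = G(k, j) - G(k+1, j)` with the denominators cleared. -/
lemma wz_identity (k j : ℕ) :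
    16 * (2 * (j : ℤ) + 1) * k.centralBinom *
        ((2 * k).choose (k + j + 1) - (2 * k).choose (k + j))
      = 64 * ((k : ℤ) - j) * k.centralBinom * (2 * k).choose (k + j)
        - 4 * ((k : ℤ) + 1 - j) * (k + 1).centralBinom * (2 * k + 2).choose (k + j + 1) := by
  have hc1 : ((k + j : ℕ) + 1 : ℤ) * (2 * k).choose (k + j + 1)
      = ((k : ℤ) - j) * (2 * k).choose (k + j) := by
    rw [succ_mul_choose_succ_int]; push_cast; ring
  have hc2 : ((k + j : ℕ) + 1 : ℤ) * ((k : ℤ) + 1 - j) * (2 * k + 2).choose (k + j + 1)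
      = (2 * k + 1) * (2 * k + 2) * (2 * k).choose (k + j) := by
    have h1 := succ_mul_choose_succ_int (2 * k + 1) (k + j)
    have h2 : ((2 * k + 1 : ℕ) + 1 : ℤ) * (2 * k + 1).choose (k + j)
        = (2 * k + 2).choose (k + j + 1) * ((k + j : ℕ) + 1 : ℤ) := by
      exact_mod_cast Nat.add_one_mul_choose_eq (2 * k + 1) (k + j)
    have h3 : ((2 * k : ℕ) + 1 : ℤ) * (2 * k).choose (k + j)
        = (2 * k + 1).choose (k + j + 1) * ((k + j : ℕ) + 1 : ℤ) := by
      exact_mod_cast Nat.add_one_mul_choose_eq (2 * k) (k + j)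
    push_cast at h1 h2 h3 ⊢
    linear_combination
      -((k : ℤ) + 1 - j) * h2 - (2 * (k : ℤ) + 2) * h1 - (2 * (k : ℤ) + 2) * h3
  have hcb : ((k : ℤ) + 1) * (k + 1).centralBinom = 2 * (2 * k + 1) * k.centralBinom := by
    exact_mod_cast Nat.succ_mul_centralBinom_succ k
  have hne : ((k : ℤ) + 1) * ((k + j : ℕ) + 1 : ℤ) ≠ 0 := by positivity
  refine mul_left_cancel₀ hne ?_
  push_cast at hc1 hc2 ⊢
  linear_combination 16 * (2 * (j : ℤ) + 1) * ((k : ℤ) + 1) * k.centralBinom * hc1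
    + 4 * ((k : ℤ) + 1 - j) * ((k : ℤ) + j + 1) * (2 * k + 2).choose (k + j + 1) * hcb
    + 8 * (2 * (k : ℤ) + 1) * k.centralBinom * hc2

section CommRing

variable {R : Type*} [CommRing R]

lemma prod_one_sub_mul_eq {ι : Type*} {a : R} (ha : a * a = 0) (s : Finset ι) (f : ι → R) :
    ∏ i ∈ s, (1 - a * f i) = 1 - a * ∑ i ∈ s, f i := by
  classical
  induction s using Finset.induction_on with
  | empty => simp
  | insert i s hi ih =>
    rw [prod_insert hi, ih, sum_insert hi]
    linear_combination (f i * ∑ i ∈ s, f i) * ha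

/-- The `S(d, j)` of the header is `binomSum 16⁻¹ m d j`. -/
def binomSum (x : R) (N d j : ℕ) : R :=
  ∑ k ∈ range (N + 1), (k.centralBinom : R) * ((2 * (k + d)).choose (k + d + j) : R) * x ^ k

lemma binomSum_succ_zero (x : R) (N d : ℕ) :
    binomSum x N (d + 1) 0 = 2 * binomSum x N d 0 + 2 * binomSum x N d 1 := by
  simp only [binomSum, mul_sum, ← sum_add_distrib, add_zero, ← add_assoc]
  refine sum_congr rfl fun k _ => ?_
  rw [show 2 * (k + d + 1) = 2 * (k + d) + 2 by omega, choose_two_mul_add_two_succ]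
  push_cast
  ring

lemma binomSum_succ_succ (x : R) (N d j : ℕ) :
    binomSum x N (d + 1) (j + 1)
      = binomSum x N d j + 2 * binomSum x N d (j + 1) + binomSum x N d (j + 2) := by
  simp only [binomSum, mul_sum, ← sum_add_distrib, ← add_assoc]
  refine sum_congr rfl fun k _ => ?_
  rw [show 2 * (k + d + 1) = 2 * (k + d) + 2 by omega,
    show k + d + 1 + j + 1 = k + d + j + 2 by omega, choose_add_two_add_two]
  push_cast
  ring

lemma binomSum_eq_four_pow_mul {x c : R} {N m : ℕ} (h : ∀ j ≤ m, binomSum x N 0 j = c) :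
    ∀ d j, d + j ≤ m → binomSum x N d j = 4 ^ d * c := by
  intro d
  induction d with
  | zero => intro j hj; simpa using h j (by omega)
  | succ d ih =>
    rintro (_ | j) hj
    · rw [binomSum_succ_zero, ih 0 (by omega), ih 1 (by omega)]
      ring
    · rw [binomSum_succ_succ, ih j (by omega), ih (j + 1) (by omega), ih (j + 2) (by omega)]
      ring

lemma binomSum_zero_self (x : R) (N : ℕ) : binomSum x N 0 N = N.centralBinom * x ^ N := by
  rw [binomSum, sum_eq_single_of_mem N (self_mem_range_succ N)]
  · simp [← two_mul]
  · intro k hk hkN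
    have hk : k < N := by have := mem_range.1 hk; omega
    simp [Nat.choose_eq_zero_of_lt (show 2 * k < k + N by omega)]

lemma two_mul_add_one_mul_binomSum_succ_sub {x : R} (hx : 16 * x = 1) (N j : ℕ) :
    (2 * (j : R) + 1) * (binomSum x N 0 (j + 1) - binomSum x N 0 j)
      = -(4 * ((N : R) + 1 - j) * (N + 1).centralBinom * (2 * N + 2).choose (N + j + 1)
          * x ^ (N + 1)) := by
  set g : ℕ → R := fun k => 4 * ((k : R) - j) * k.centralBinom * (2 * k).choose (k + j) * x ^ k
  have hterm : ∀ k, (2 * (j : R) + 1)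
      * ((k.centralBinom : R) * (2 * k).choose (k + j + 1) * x ^ k
        - k.centralBinom * (2 * k).choose (k + j) * x ^ k) = g k - g (k + 1) := by
    intro k
    have h := congrArg (Int.cast : ℤ → R) (wz_identity k j)
    push_cast at h
    simp only [g]
    push_cast
    rw [show 2 * (k + 1) = 2 * k + 2 by omega, show k + 1 + j = k + j + 1 by omega]
    linear_combination x ^ (k + 1) * h - x ^ k * k.centralBinom
      * ((2 * (j : R) + 1) * ((2 * k).choose (k + j + 1) - (2 * k).choose (k + j))
        - 4 * ((k : R) - j) * (2 * k).choose (k + j)) * hx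
  have hg0 : g 0 = 0 := by
    cases j <;> simp [g]
  simp only [binomSum, add_zero, ← add_assoc]
  rw [← sum_sub_distrib, mul_sum, sum_congr rfl fun k _ => hterm k, sum_range_sub', hg0]
  simp only [g]
  push_cast
  rw [show 2 * (N + 1) = 2 * N + 2 by omega, show N + 1 + j = N + j + 1 by omega]
  ring

end CommRing

section PrimeSq

variable {p : ℕ}

/-- `ZMod`'s inverse is `0` on non-units; it is only used below with `q = p ^ 2` and `n < p`, where
every `i + 1` is a unit. -/
def harmonicZMod (q n : ℕ) : ZMod q := ∑ i ∈ range n, ((i + 1 : ℕ) : ZMod q)⁻¹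

lemma natCast_mul_self_eq_zero : (p : ZMod (p ^ 2)) * p = 0 := by
  rw [← Nat.cast_mul, ← sq, ZMod.natCast_self]

lemma natCast_mul_eq_zero {a b : ℕ} (ha : p ∣ a) (hb : p ∣ b) :
    (a : ZMod (p ^ 2)) * b = 0 := by
  rw [← Nat.cast_mul, ZMod.natCast_eq_zero_iff, sq]
  exact mul_dvd_mul ha hb

lemma isUnit_natCast (hp : p.Prime) {n : ℕ} (h0 : n ≠ 0) (hn : n < p) :
    IsUnit (n : ZMod (p ^ 2)) :=
  (ZMod.isUnit_iff_coprime n (p ^ 2)).2 ((Nat.coprime_of_lt_prime h0 hn hp).symm.pow_right 2)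

lemma natCast_mul_inv (hp : p.Prime) {n : ℕ} (h0 : n ≠ 0) (hn : n < p) :
    (n : ZMod (p ^ 2)) * (n : ZMod (p ^ 2))⁻¹ = 1 :=
  ZMod.mul_inv_of_unit _ (isUnit_natCast hp h0 hn)

lemma isUnit_two (hp : p.Prime) (hp2 : p ≠ 2) : IsUnit (2 : ZMod (p ^ 2)) := by
  exact_mod_cast isUnit_natCast hp two_ne_zero (lt_of_le_of_ne hp.two_le (Ne.symm hp2))

lemma isUnit_factorial (hp : p.Prime) {n : ℕ} (hn : n < p) : IsUnit (n ! : ZMod (p ^ 2)) := by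
  have hcop : p.Coprime n ! :=
    hp.coprime_iff_not_dvd.2 fun h => absurd (hp.dvd_factorial.1 h) (by omega)
  exact (ZMod.isUnit_iff_coprime _ _).2 (hcop.symm.pow_right 2)

lemma prime_dvd_choose_succ (hp : p.Prime) {t : ℕ} (h2 : 2 ≤ t) (ht : t < p) :
    p ∣ (p + 1).choose t := by
  obtain ⟨s, rfl⟩ : ∃ s, t = s + 1 := ⟨t - 1, by omega⟩
  rw [Nat.choose_succ_succ']
  exact dvd_add (hp.dvd_choose_self (by omega) (by omega)) (hp.dvd_choose_self (by omega) ht)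

lemma choose_pred_eq (hp : p.Prime) {n : ℕ} (hn : n < p) :
    ((p - 1).choose n : ZMod (p ^ 2))
      = (-1) ^ n * (1 - (p : ZMod (p ^ 2)) * harmonicZMod (p ^ 2) n) := by
  have hfactor : ∀ i ∈ range n, ((p - 1 - i : ℕ) : ZMod (p ^ 2))
      = -1 * (((i + 1 : ℕ) : ZMod (p ^ 2)) * (1 - p * ((i + 1 : ℕ) : ZMod (p ^ 2))⁻¹)) := by
    intro i hi
    have hi : i < n := mem_range.1 hi
    have hinv := natCast_mul_inv hp (n := i + 1) (by omega) (by omega)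
    rw [Nat.sub_sub, Nat.cast_sub (by omega)]
    push_cast at hinv ⊢
    linear_combination -(p : ZMod (p ^ 2)) * hinv
  apply (isUnit_factorial hp hn).mul_left_cancel
  rw [← Nat.cast_mul, ← Nat.descFactorial_eq_factorial_mul_choose,
    Nat.descFactorial_eq_prod_range, Nat.cast_prod, prod_congr rfl hfactor, prod_mul_distrib,
    prod_mul_distrib, prod_const, card_range, prod_one_sub_mul_eq natCast_mul_self_eq_zero,
    Nat.factorial_eq_prod_range_add_one, Nat.cast_prod, harmonicZMod]
  ring

lemma choose_succ_eq (hp : p.Prime) {i : ℕ} (hi : i + 1 < p) :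
    (p.choose (i + 1) : ZMod (p ^ 2)) = p * (-1) ^ i * ((i + 1 : ℕ) : ZMod (p ^ 2))⁻¹ := by
  have hmul : (p : ZMod (p ^ 2)) * (p - 1).choose i
      = p.choose (i + 1) * ((i + 1 : ℕ) : ZMod (p ^ 2)) := by
    have h := Nat.add_one_mul_choose_eq (p - 1) i
    rw [Nat.sub_add_cancel hp.one_le] at h
    simpa using congrArg (Nat.cast : ℕ → ZMod (p ^ 2)) h
  rw [choose_pred_eq hp (by omega)] at hmul
  have hinv := natCast_mul_inv hp (n := i + 1) (by omega) hi
  set v := ((i + 1 : ℕ) : ZMod (p ^ 2))⁻¹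
  linear_combination -(p.choose (i + 1) : ZMod (p ^ 2)) * hinv - v * hmul
    - v * (-1) ^ i * harmonicZMod (p ^ 2) i * natCast_mul_self_eq_zero (p := p)

lemma natCast_mul_inv_sub (hp : p.Prime) {a : ℕ} (h0 : a ≠ 0) (ha : a < p) :
    (p : ZMod (p ^ 2)) * ((p - a : ℕ) : ZMod (p ^ 2))⁻¹ = -(p * (a : ZMod (p ^ 2))⁻¹) := by
  have hinv_a := natCast_mul_inv hp h0 ha
  have hinv_b := natCast_mul_inv hp (n := p - a) (by omega) (by omega)
  have hsum : ((p - a : ℕ) : ZMod (p ^ 2)) + a = p := by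
    rw [← Nat.cast_add, Nat.sub_add_cancel ha.le]
  set u := (a : ZMod (p ^ 2))⁻¹
  set v := ((p - a : ℕ) : ZMod (p ^ 2))⁻¹
  linear_combination -(p : ZMod (p ^ 2)) * v * hinv_a - p * u * hinv_b + p * u * v * hsum
    + u * v * natCast_mul_self_eq_zero (p := p)

lemma harmonicZMod_succ (q n : ℕ) :
    harmonicZMod q (n + 1) = harmonicZMod q n + ((n + 1 : ℕ) : ZMod q)⁻¹ :=
  sum_range_succ _ _

lemma natCast_mul_harmonicZMod_pred (hp : p.Prime) (hp2 : p ≠ 2) :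
    (p : ZMod (p ^ 2)) * harmonicZMod (p ^ 2) (p - 1) = 0 := by
  have hneg : (p : ZMod (p ^ 2)) * harmonicZMod (p ^ 2) (p - 1)
      = -((p : ZMod (p ^ 2)) * harmonicZMod (p ^ 2) (p - 1)) := by
    rw [harmonicZMod, mul_sum, ← sum_neg_distrib]
    conv_lhs => rw [← sum_range_reflect]
    refine sum_congr rfl fun i hi => ?_
    have hi : i < p - 1 := mem_range.1 hi
    rw [show p - 1 - 1 - i + 1 = p - (i + 1) by omega]
    exact natCast_mul_inv_sub hp (a := i + 1) (by omega) (by omega)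
  refine (isUnit_two hp hp2).mul_left_cancel ?_
  linear_combination hneg

lemma sum_alternating_inv_eq (hp : p.Prime) {n : ℕ} (hn : 2 * n < p) :
    ∑ i ∈ range (2 * n), (-1) ^ i * ((i + 1 : ℕ) : ZMod (p ^ 2))⁻¹
      = harmonicZMod (p ^ 2) (2 * n) - harmonicZMod (p ^ 2) n := by
  induction n with
  | zero => simp [harmonicZMod]
  | succ n ih =>
    have hhalf :
        ((n + 1 : ℕ) : ZMod (p ^ 2))⁻¹ = 2 * ((2 * n + 1 + 1 : ℕ) : ZMod (p ^ 2))⁻¹ := by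
      refine ZMod.inv_eq_of_mul_eq_one _ _ _ ?_
      have h := natCast_mul_inv hp (n := 2 * n + 1 + 1) (by omega) (by omega)
      push_cast at h ⊢
      linear_combination h
    rw [show 2 * (n + 1) = 2 * n + 1 + 1 by ring, sum_range_succ, sum_range_succ,
      harmonicZMod_succ, harmonicZMod_succ, harmonicZMod_succ, ih (by omega), hhalf,
      (even_two_mul n).neg_one_pow, (odd_two_mul_add_one n).neg_one_pow]
    ring

lemma two_add_sum_range_choose_succ (n : ℕ) :
    2 + ∑ i ∈ range n, (n + 1).choose (i + 1) = 2 ^ (n + 1) := by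
  rw [← Nat.sum_range_choose, sum_range_succ, sum_range_succ', Nat.choose_self,
    Nat.choose_zero_right]
  ring

lemma two_pow_eq {m : ℕ} (hp : p.Prime) (hm : p = 2 * m + 1) :
    (2 : ZMod (p ^ 2)) ^ p = 2 - (p : ZMod (p ^ 2)) * harmonicZMod (p ^ 2) m := by
  have h := congrArg (Nat.cast : ℕ → ZMod (p ^ 2)) (two_add_sum_range_choose_succ (2 * m))
  rw [← hm] at h
  push_cast at h
  rw [← h, sum_congr rfl fun i hi => choose_succ_eq hp (by have := mem_range.1 hi; omega)]
  simp only [mul_assoc, ← mul_sum]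
  rw [sum_alternating_inv_eq hp (by omega), mul_sub, show 2 * m = p - 1 by omega,
    natCast_mul_harmonicZMod_pred hp (by omega)]
  ring

/-- Morley's congruence modulo `p²`: both sides equal `(-1)^m (1 - p H_m)`, the left one by
`choose_pred_eq`, the right one because `2^p ≡ 2 - p H_m` by `two_pow_eq`. -/
lemma centralBinom_eq_neg_one_pow_mul_four_pow {m : ℕ} (hp : p.Prime) (hm : p = 2 * m + 1) :
    (m.centralBinom : ZMod (p ^ 2)) = (-1) ^ m * 4 ^ (p - 1) := by
  have h4 : IsUnit (4 : ZMod (p ^ 2)) := by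
    simpa [show (4 : ZMod (p ^ 2)) = 2 ^ 2 by norm_num] using (isUnit_two hp (by omega)).pow 2
  have hfermat :
      (4 : ZMod (p ^ 2)) ^ (p - 1) = 1 - (p : ZMod (p ^ 2)) * harmonicZMod (p ^ 2) m := by
    refine h4.mul_left_cancel ?_
    rw [← pow_succ' (4 : ZMod (p ^ 2)) (p - 1), Nat.sub_add_cancel hp.one_le,
      show (4 : ZMod (p ^ 2)) = 2 ^ 2 by norm_num, ← pow_mul, mul_comm, pow_mul, two_pow_eq hp hm]
    linear_combination harmonicZMod (p ^ 2) m ^ 2 * natCast_mul_self_eq_zero (p := p)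
  rw [Nat.centralBinom_eq_two_mul_choose, show 2 * m = p - 1 by omega,
    choose_pred_eq hp (by omega), hfermat]

lemma binomSum_zero_succ {m : ℕ} (hp : p.Prime) (hm : p = 2 * m + 1) {x : ZMod (p ^ 2)}
    (hx : 16 * x = 1) {j : ℕ} (hj : j < m) : binomSum x m 0 (j + 1) = binomSum x m 0 j := by
  have hboundary :
      ((m + 1).centralBinom : ZMod (p ^ 2)) * (2 * m + 2).choose (m + j + 1) = 0 := by
    rw [Nat.centralBinom_eq_two_mul_choose, show 2 * (m + 1) = p + 1 by omega,
      show 2 * m + 2 = p + 1 by omega]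
    exact natCast_mul_eq_zero (prime_dvd_choose_succ hp (by omega) (by omega))
      (prime_dvd_choose_succ hp (by omega) (by omega))
  have hunit : IsUnit (2 * (j : ZMod (p ^ 2)) + 1) := by
    exact_mod_cast isUnit_natCast hp (n := 2 * j + 1) (by omega) (by omega)
  refine sub_eq_zero.1 (hunit.mul_left_cancel ?_)
  rw [two_mul_add_one_mul_binomSum_succ_sub hx m j]
  linear_combination -4 * ((m : ZMod (p ^ 2)) + 1 - j) * x ^ (m + 1) * hboundary

lemma binomSum_zero_eq_neg_one_pow {m : ℕ} (hp : p.Prime) (hm : p = 2 * m + 1)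
    {x : ZMod (p ^ 2)} (hx : 16 * x = 1) {j : ℕ} (hj : j ≤ m) :
    binomSum x m 0 j = (-1) ^ m := by
  induction hj using Nat.decreasingInduction with
  | self =>
    rw [binomSum_zero_self, centralBinom_eq_neg_one_pow_mul_four_pow hp hm,
      show p - 1 = 2 * m by omega, pow_mul, mul_assoc, ← mul_pow]
    norm_num [hx]
  | of_succ k hk ih => rw [← binomSum_zero_succ hp hm hx hk, ih]

lemma binomSum_eq {m d : ℕ} (hp : p.Prime) (hm : p = 2 * m + 1) {x : ZMod (p ^ 2)}
    (hx : 16 * x = 1) (hd : d ≤ m) : binomSum x m d 0 = 4 ^ d * (-1) ^ m :=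
  binomSum_eq_four_pow_mul (fun _ hj => binomSum_zero_eq_neg_one_pow hp hm hx hj) d 0 (by omega)

end PrimeSq

lemma jacobiSym_neg_one_two_mul_add_one (m : ℕ) : jacobiSym (-1) (2 * m + 1) = (-1) ^ m := by
  rw [jacobiSym.at_neg_one (odd_two_mul_add_one m), ZMod.χ₄_eq_neg_one_pow (by omega)]
  congr 1
  omega

end CentralBinomSum

/-- Theorem 1.2, congruence (1.3): for a prime `p > 3` and `d ∈ {0, ..., (p-1)/2}`,
`∑_{k=0}^{(p-1)/2} C(2k,k) C(2k+2d,k+d) / 16^k ≡ 4^d (-1/p) (mod p²)`. -/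
theorem stmt_1 (p : ℕ) (hp : p.Prime) (hp3 : 3 < p) (d : ℕ) (hd : d ≤ (p - 1) / 2) :
    (∑ k ∈ Finset.range ((p - 1) / 2 + 1),
        (Nat.choose (2 * k) k : ZMod (p ^ 2)) *
          (Nat.choose (2 * k + 2 * d) (k + d) : ZMod (p ^ 2)) *
            ((16 : ZMod (p ^ 2))⁻¹) ^ k) =
      (4 : ZMod (p ^ 2)) ^ d * ((jacobiSym (-1) p : ℤ) : ZMod (p ^ 2)) := by
  obtain ⟨m, hm⟩ := hp.odd_of_ne_two (by omega)
  have hx : (16 : ZMod (p ^ 2)) * 16⁻¹ = 1 := by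
    refine ZMod.mul_inv_of_unit _ ?_
    simpa [show (16 : ZMod (p ^ 2)) = 2 ^ 4 by norm_num]
      using (CentralBinomSum.isUnit_two hp (by omega)).pow 4
  have hjacobi : jacobiSym (-1) p = (-1) ^ m :=
    hm ▸ CentralBinomSum.jacobiSym_neg_one_two_mul_add_one m
  rw [show (p - 1) / 2 = m by omega] at hd ⊢
  rw [hjacobi, Int.cast_pow, Int.cast_neg, Int.cast_one,
    ← CentralBinomSum.binomSum_eq hp hm hx hd]
  refine Finset.sum_congr rfl fun k _ => ?_
  rw [Nat.centralBinom_eq_two_mul_choose, mul_add, add_zero]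
end

section
/- Let p be a prime with p ≡ 3 (mod 4). Then the following five quantities are all congruent modulo p: Σ_{k=0}^{(p-1)/2} C(2k,k)·C_k·8^{-k}; −2·Σ_{k=0}^{(p-1)/2} k·C(2k,k)²·8^{-k}; −(1/2)·Σ_{k=0}^{(p-1)/2} C(2k,k)·C_k·(−16)^{-k}; 4·Σ_{k=0}^{(p-1)/2} k·C(2k,k)²·(−16)^{-k}; and ((-1)^{(p+1)/4}/2)·C((p+1)/2,(p+1)/4). -/
/-!
Put `n = (p - 1) / 2 = 2t + 1`. Modulo `p` we have `C(2k,k) ≡ (-4)^k C(n,k)` and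
`C_k ≡ 2 (-4)^k C(n+1,k+1)`, so the four sums are the values at `x = 2` and `x = -1` of
`F(x) = ∑ C(n,k) C(n+1,k+1) x^(k+1)` and of `x f'(x)`, where `f(x) = ∑ C(n,k)² x^k` and
`F' = (n+1) f`. Vandermonde's identity and `C(2n-j, n-j) ≡ (-1)^(n-j) C(n,j)` give the
reflection `f(1 + x) ≡ -f(-x)`. Differentiating it gives `f'(2) = f'(-1)`; integrating it gives
`F(2) = F(-1)`, which is legitimate because `deg F < p` and `F(1) = C(p,n) ≡ 0`. Finally `F(-1)`
and `f'(-1)` are alternating Vandermonde sums, read off as middle coefficients of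
`(1 - x²)^a (1 + x)`.
-/

open Polynomial Finset

theorem Nat.sum_range_choose_sq_mul_choose (n j : ℕ) :
    ∑ k ∈ range (n + 1), n.choose k ^ 2 * k.choose j =
      n.choose j * (2 * n - j).choose (n - j) := by
  rcases lt_or_ge n j with hnj | hjn
  · rw [Nat.choose_eq_zero_of_lt hnj, zero_mul]
    exact sum_eq_zero fun k hk => by
      rw [Nat.choose_eq_zero_of_lt (n := k) (by simp at hk; omega), mul_zero]
  obtain ⟨m, rfl⟩ := Nat.exists_eq_add_of_le hjn
  rw [show j + m + 1 = j + (m + 1) by ring, sum_range_add,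
    sum_eq_zero fun k hk => by rw [Nat.choose_eq_zero_of_lt (n := k) (by simpa using hk), mul_zero],
    zero_add, show 2 * (j + m) - j = m + (j + m) by omega, Nat.add_sub_cancel_left,
    Nat.add_choose_eq m (j + m) m, Nat.sum_antidiagonal_eq_sum_range_succ_mk, mul_sum]
  refine sum_congr rfl fun i hi => ?_
  have hi : i ≤ m := by simpa [Nat.lt_succ_iff] using hi
  rw [sq, mul_assoc, Nat.choose_mul (show j ≤ j + i by omega), Nat.add_sub_cancel_left,
    Nat.add_sub_cancel_left,
    ← Nat.choose_symm_of_eq_add (show j + m = (j + i) + (m - i) by omega)]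
  ring

theorem Nat.sum_range_choose_mul_choose_succ (n : ℕ) :
    ∑ k ∈ range (n + 1), n.choose k * (n + 1).choose (k + 1) = (2 * n + 1).choose n := by
  rw [show 2 * n + 1 = n + (n + 1) by ring, Nat.add_choose_eq,
    Nat.sum_antidiagonal_eq_sum_range_succ_mk]
  refine sum_congr rfl fun k hk => ?_
  have hk : k ≤ n := by simpa [Nat.lt_succ_iff] using hk
  rw [Nat.choose_symm_of_eq_add (show n + 1 = (k + 1) + (n - k) by omega)]

theorem Polynomial.coeff_comp_neg_X {R : Type*} [CommRing R] (q : R[X]) (k : ℕ) :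
    (q.comp (-X)).coeff k = (-1) ^ k * q.coeff k := by
  induction q using Polynomial.induction_on' with
  | add q r hq hr => simp [add_comp, hq, hr, mul_add]
  | monomial n a =>
    rw [monomial_comp, neg_pow, ← C_1, ← C_neg, ← C_pow, ← mul_assoc, ← C_mul,
      coeff_C_mul_X_pow, coeff_monomial]
    split_ifs <;> simp_all [mul_comm]

theorem Polynomial.coeff_one_sub_X_pow {R : Type*} [CommRing R] (a k : ℕ) :
    ((1 - X : R[X]) ^ a).coeff k = (-1) ^ k * a.choose k := by
  have : (1 - X : R[X]) ^ a = ((1 + X) ^ a).comp (-X) := by simp [sub_eq_add_neg]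
  rw [this, coeff_comp_neg_X, coeff_one_add_X_pow]

theorem Polynomial.coeff_one_sub_X_sq_pow {R : Type*} [CommRing R] (a k : ℕ) :
    ((1 - X ^ 2 : R[X]) ^ a).coeff k =
      if 2 ∣ k then (-1 : R) ^ (k / 2) * a.choose (k / 2) else 0 := by
  have : (1 - X ^ 2 : R[X]) ^ a = expand R 2 ((1 - X) ^ a) := by simp
  rw [this, coeff_expand two_pos]
  split_ifs <;> simp [coeff_one_sub_X_pow]

theorem Int.alternating_sum_choose_mul_choose_succ (a : ℕ) :
    ∑ i ∈ Finset.range (a + 1), (-1 : ℤ) ^ i * a.choose i * (a + 1).choose (i + 1) =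
      (-1) ^ (a / 2) * a.choose (a / 2) := by
  have hcoeff : ((1 - X : ℤ[X]) ^ a * (1 + X) ^ (a + 1)).coeff a =
      ∑ i ∈ Finset.range (a + 1), (-1 : ℤ) ^ i * a.choose i * (a + 1).choose (i + 1) := by
    rw [coeff_mul, Nat.sum_antidiagonal_eq_sum_range_succ_mk]
    refine sum_congr rfl fun i hi => ?_
    rw [coeff_one_sub_X_pow, coeff_one_add_X_pow,
      Nat.choose_symm_of_eq_add (show a + 1 = (a - i) + (i + 1) by simp at hi; omega)]
  have hfactor : (1 - X : ℤ[X]) ^ a * (1 + X) ^ (a + 1) =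
      (1 - X ^ 2) ^ a + X * (1 - X ^ 2) ^ a := by
    rw [pow_succ, ← mul_assoc, ← mul_pow]
    ring
  rw [← hcoeff, hfactor, coeff_add]
  obtain ⟨b, rfl | rfl⟩ := Nat.even_or_odd' a
  · rcases b with _ | b
    · simp
    rw [show 2 * (b + 1) = (2 * b + 1) + 1 by ring, coeff_X_mul, coeff_one_sub_X_sq_pow,
      coeff_one_sub_X_sq_pow, if_pos (by omega), if_neg (by omega)]
    simp
  · rw [coeff_X_mul, coeff_one_sub_X_sq_pow, coeff_one_sub_X_sq_pow, if_neg (by omega),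
      if_pos (by omega)]
    simp [show (2 * b + 1) / 2 = b by omega]

theorem Int.alternating_sum_mul_choose_sq (m : ℕ) :
    ∑ k ∈ Finset.range (m + 1 + 1), (k : ℤ) * ((m + 1).choose k : ℤ) ^ 2 * (-1) ^ k =
      -(((m : ℤ) + 1) * ((-1) ^ (m / 2) * (m.choose (m / 2) : ℤ))) := by
  rw [sum_range_succ', ← alternating_sum_choose_mul_choose_succ, mul_sum, ← sum_neg_distrib]
  simp only [CharP.cast_eq_zero, zero_mul, add_zero]
  refine sum_congr rfl fun k _ => ?_
  have := congrArg (Nat.cast : ℕ → ℤ) (Nat.add_one_mul_choose_eq m k)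
  push_cast at this ⊢
  linear_combination (-1 : ℤ) ^ k * ((m + 1).choose (k + 1) : ℤ) * this

theorem CharP.natCast_ne_zero_of_lt {R : Type*} [AddMonoidWithOne R] {p : ℕ} [CharP R p] {k : ℕ}
    (h0 : k ≠ 0) (hk : k < p) : (k : R) ≠ 0 := by
  rw [Ne, CharP.cast_eq_zero_iff R p]
  exact fun h => (Nat.le_of_dvd (Nat.pos_of_ne_zero h0) h).not_gt hk

theorem CharP.eq_of_add_one_mul_eq {R : Type*} [CommRing R] [IsDomain R] {p : ℕ} [CharP R p]
    {N : ℕ} (hN : N < p) {a b : ℕ → R} (c : ℕ → R) (h0 : a 0 = b 0)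
    (ha : ∀ i < N, (i + 1) * a (i + 1) = c i * a i)
    (hb : ∀ i < N, (i + 1) * b (i + 1) = c i * b i) : ∀ i ≤ N, a i = b i := by
  intro i hi
  induction i with
  | zero => exact h0
  | succ i ih =>
    refine mul_left_cancel₀ (a := ((i + 1 : ℕ) : R))
      (natCast_ne_zero_of_lt i.succ_ne_zero (by omega)) ?_
    push_cast
    rw [ha i hi, hb i hi, ih (by omega)]

theorem Polynomial.eq_of_derivative_eq_of_natDegree_lt {R : Type*} [CommRing R] [IsDomain R]
    {p : ℕ} [CharP R p] {P Q : R[X]} (hP : P.natDegree < p) (hQ : Q.natDegree < p)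
    (hd : derivative P = derivative Q) (h0 : P.coeff 0 = Q.coeff 0) : P = Q := by
  ext (_ | i)
  · exact h0
  by_cases hi : i + 1 < p
  · have hi' := congrArg (coeff · i) hd
    simp only [coeff_derivative] at hi'
    exact mul_right_cancel₀
      (by exact_mod_cast CharP.natCast_ne_zero_of_lt (R := R) i.succ_ne_zero hi) hi'
  · rw [coeff_eq_zero_of_natDegree_lt (by omega), coeff_eq_zero_of_natDegree_lt (by omega)]

namespace ZMod

variable {p : ℕ} [Fact p.Prime]

theorem natCast_choose_of_add_eq {m j : ℕ} (h : m + j + 1 = p) :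
    ∀ i ≤ m, (m.choose i : ZMod p) = (-1) ^ i * ((i + j).choose i : ℕ) := by
  have hm : (m : ZMod p) = -(j + 1) := by
    have := congrArg (Nat.cast : ℕ → ZMod p) h
    push_cast [ZMod.natCast_self] at this
    linear_combination this
  refine CharP.eq_of_add_one_mul_eq (by omega) (fun i => -(i + j + 1)) (by simp)
    (fun i hi => ?_) (fun i _ => ?_)
  · have := congrArg (Nat.cast : ℕ → ZMod p) (Nat.choose_succ_right_eq m i)
    push_cast [Nat.cast_sub hi.le, hm] at this
    linear_combination this
  · have := congrArg (Nat.cast : ℕ → ZMod p) (Nat.add_one_mul_choose_eq (i + j) i)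
    push_cast at this
    rw [show i + 1 + j = i + j + 1 by ring]
    linear_combination (-1 : ZMod p) ^ i * this

variable {n : ℕ} (hn : 2 * n + 1 = p)
include hn

theorem two_mul_add_one_eq_zero : 2 * (n : ZMod p) + 1 = 0 := by
  exact_mod_cast (congrArg (Nat.cast : ℕ → ZMod p) hn).trans (ZMod.natCast_self p)

theorem natCast_centralBinom :
    ∀ k ≤ n, ((2 * k).choose k : ZMod p) = (-4) ^ k * n.choose k := by
  refine CharP.eq_of_add_one_mul_eq (by omega) (fun k => 2 * (2 * k + 1)) (by simp)
    (fun k _ => ?_) (fun k hk => ?_)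
  · have := congrArg (Nat.cast : ℕ → ZMod p) (Nat.succ_mul_centralBinom_succ k)
    simp only [Nat.centralBinom_eq_two_mul_choose] at this
    push_cast at this
    exact this
  · have := congrArg (Nat.cast : ℕ → ZMod p) (Nat.choose_succ_right_eq n k)
    push_cast [Nat.cast_sub hk.le] at this
    linear_combination (-4 : ZMod p) ^ (k + 1) * this -
      2 * (-4 : ZMod p) ^ k * n.choose k * two_mul_add_one_eq_zero hn

theorem natCast_catalan {k : ℕ} (hk : k ≤ n) :
    (catalan k : ZMod p) = 2 * (-4) ^ k * (n + 1).choose (k + 1) := by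
  have := (Fact.out : p.Prime).two_le
  refine mul_left_cancel₀ (a := ((k + 1 : ℕ) : ZMod p))
    (CharP.natCast_ne_zero_of_lt k.succ_ne_zero (by omega)) ?_
  have hcat := congrArg (Nat.cast : ℕ → ZMod p) (succ_mul_catalan_eq_centralBinom k)
  have hchoose := congrArg (Nat.cast : ℕ → ZMod p) (Nat.add_one_mul_choose_eq n k)
  rw [Nat.centralBinom_eq_two_mul_choose] at hcat
  push_cast at hcat hchoose ⊢
  rw [hcat, natCast_centralBinom hn k hk]
  linear_combination 2 * (-4 : ZMod p) ^ k * hchoose -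
    (-4 : ZMod p) ^ k * n.choose k * two_mul_add_one_eq_zero hn

end ZMod

namespace Polynomial

variable (R : Type*) [CommRing R]

noncomputable def chooseSqPoly (n : ℕ) : R[X] :=
  ∑ k ∈ range (n + 1), C ((n.choose k : R) ^ 2) * X ^ k

noncomputable def chooseSqAntideriv (n : ℕ) : R[X] :=
  ∑ k ∈ range (n + 1), C ((n.choose k : R) * (n + 1).choose (k + 1)) * X ^ (k + 1)

variable {R}

theorem coeff_chooseSqPoly (n j : ℕ) : (chooseSqPoly R n).coeff j = (n.choose j : R) ^ 2 := by
  simp only [chooseSqPoly, finsetSum_coeff, coeff_C_mul_X_pow]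
  rw [sum_ite_eq]
  split_ifs with hj
  · rfl
  · simp [Nat.choose_eq_zero_of_lt (show n < j by simpa using hj)]

theorem derivative_chooseSqAntideriv (n : ℕ) :
    derivative (chooseSqAntideriv R n) = C ((n : R) + 1) * chooseSqPoly R n := by
  rw [chooseSqAntideriv, chooseSqPoly, derivative_sum, mul_sum]
  refine sum_congr rfl fun k _ => ?_
  have := congrArg (Nat.cast : ℕ → R) (Nat.add_one_mul_choose_eq n k)
  push_cast at this
  rw [derivative_C_mul_X_pow, Nat.add_sub_cancel, ← mul_assoc, ← C_mul]
  congr 2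
  push_cast
  linear_combination -(n.choose k : R) * this

theorem natDegree_chooseSqAntideriv_le (n : ℕ) : (chooseSqAntideriv R n).natDegree ≤ n + 1 := by
  refine natDegree_sum_le_of_forall_le _ _ fun k hk => (natDegree_C_mul_X_pow_le _ _).trans ?_
  simp at hk; omega

theorem eval_chooseSqAntideriv (n : ℕ) (x : R) :
    (chooseSqAntideriv R n).eval x =
      ∑ k ∈ range (n + 1), (n.choose k : R) * (n + 1).choose (k + 1) * x ^ (k + 1) := by
  simp [chooseSqAntideriv, eval_finsetSum]

theorem mul_eval_derivative_chooseSqPoly (n : ℕ) (x : R) :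
    x * (derivative (chooseSqPoly R n)).eval x =
      ∑ k ∈ range (n + 1), (k : R) * n.choose k ^ 2 * x ^ k := by
  rw [chooseSqPoly, derivative_sum, eval_finsetSum, mul_sum]
  refine sum_congr rfl fun k _ => ?_
  rw [derivative_C_mul_X_pow, eval_C_mul, eval_X_pow]
  rcases k with _ | k
  · simp
  · push_cast
    ring

theorem eval_neg_one_chooseSqAntideriv (n : ℕ) :
    (chooseSqAntideriv R n).eval (-1) = -((-1) ^ (n / 2) * n.choose (n / 2)) := by
  have := congrArg (Int.cast : ℤ → R) (Int.alternating_sum_choose_mul_choose_succ n)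
  push_cast at this
  rw [eval_chooseSqAntideriv, ← this, ← sum_neg_distrib]
  refine sum_congr rfl fun k _ => ?_
  ring

variable {p : ℕ} [Fact p.Prime] {n : ℕ}

theorem chooseSqPoly_comp_X_add_one (hn : 2 * n + 1 = p) (hodd : Odd n) :
    (chooseSqPoly (ZMod p) n).comp (X + 1) = -(chooseSqPoly (ZMod p) n).comp (-X) := by
  ext j
  have hsum := congrArg (Nat.cast : ℕ → ZMod p) (Nat.sum_range_choose_sq_mul_choose n j)
  push_cast at hsum
  rw [coeff_neg, coeff_comp_neg_X, coeff_chooseSqPoly, chooseSqPoly, sum_comp, finsetSum_coeff]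
  simp only [mul_comp, C_comp, X_pow_comp, coeff_C_mul, coeff_X_add_one_pow]
  rw [hsum]
  rcases lt_or_ge n j with hnj | hjn
  · simp [Nat.choose_eq_zero_of_lt hnj]
  rw [ZMod.natCast_choose_of_add_eq (m := 2 * n - j) (j := j) (by omega) (n - j) (by omega),
    Nat.sub_add_cancel hjn, Nat.choose_symm hjn]
  have hsign : (-1 : ZMod p) ^ (n - j) * (-1) ^ j = -1 := by
    rw [← pow_add, Nat.sub_add_cancel hjn, hodd.neg_one_pow]
  have hsq : ((-1 : ZMod p) ^ j) ^ 2 = 1 := by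
    rw [← pow_mul, mul_comm, pow_mul, neg_one_sq, one_pow]
  linear_combination (n.choose j : ZMod p) ^ 2 * ((-1) ^ j * hsign - (-1) ^ (n - j) * hsq)

theorem eval_one_chooseSqAntideriv (hn : 2 * n + 1 = p) (hn0 : n ≠ 0) :
    (chooseSqAntideriv (ZMod p) n).eval 1 = 0 := by
  have := congrArg (Nat.cast : ℕ → ZMod p) (Nat.sum_range_choose_mul_choose_succ n)
  push_cast at this
  simp only [eval_chooseSqAntideriv, one_pow, mul_one]
  rw [this, hn, ZMod.natCast_eq_zero_iff]
  exact (Fact.out : p.Prime).dvd_choose_self hn0 (by omega)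

theorem chooseSqAntideriv_comp_X_add_one (hn : 2 * n + 1 = p) (hodd : Odd n) :
    (chooseSqAntideriv (ZMod p) n).comp (X + 1) = (chooseSqAntideriv (ZMod p) n).comp (-X) := by
  have hn0 : n ≠ 0 := by rintro rfl; simp at hodd
  have hdeg : ∀ q : (ZMod p)[X], q.natDegree ≤ 1 →
      ((chooseSqAntideriv (ZMod p) n).comp q).natDegree < p := fun q hq =>
    natDegree_comp_le.trans_lt <|
      (Nat.mul_le_mul (natDegree_chooseSqAntideriv_le n) hq).trans_lt (by omega)
  refine eq_of_derivative_eq_of_natDegree_lt (hdeg _ (by compute_degree)) (hdeg _ (by simp)) ?_ ?_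
  · rw [derivative_comp, derivative_comp, derivative_chooseSqAntideriv, mul_comp, mul_comp,
      chooseSqPoly_comp_X_add_one hn hodd]
    simp
  · rw [coeff_zero_eq_eval_zero, coeff_zero_eq_eval_zero, eval_comp, eval_comp]
    simp [eval_one_chooseSqAntideriv hn hn0, eval_chooseSqAntideriv]

theorem eval_two_chooseSqAntideriv (hn : 2 * n + 1 = p) (hodd : Odd n) :
    (chooseSqAntideriv (ZMod p) n).eval 2 = (chooseSqAntideriv (ZMod p) n).eval (-1) := by
  simpa [eval_comp, one_add_one_eq_two] using
    congrArg (eval 1) (chooseSqAntideriv_comp_X_add_one hn hodd)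

theorem eval_two_derivative_chooseSqPoly (hn : 2 * n + 1 = p) (hodd : Odd n) :
    (derivative (chooseSqPoly (ZMod p) n)).eval 2 =
      (derivative (chooseSqPoly (ZMod p) n)).eval (-1) := by
  simpa [derivative_comp, eval_comp, one_add_one_eq_two] using
    congrArg (fun q => (derivative q).eval 1) (chooseSqPoly_comp_X_add_one hn hodd)

theorem four_mul_eval_neg_one_derivative_chooseSqPoly {t : ℕ} (hn : 2 * n + 1 = p)
    (ht : n = 2 * t + 1) :
    4 * (derivative (chooseSqPoly (ZMod p) n)).eval (-1) = (-1) ^ t * n.choose t := by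
  subst ht
  have hD := mul_eval_derivative_chooseSqPoly (R := ZMod p) (2 * t + 1) (-1)
  have hsum := congrArg (Int.cast : ℤ → ZMod p) (Int.alternating_sum_mul_choose_sq (2 * t))
  push_cast at hsum
  rw [show 2 * t / 2 = t by omega] at hsum
  have hchoose := congrArg (Nat.cast : ℕ → ZMod p) (Nat.add_one_mul_choose_eq (2 * t) t)
  rw [Nat.choose_symm_of_eq_add (show 2 * t + 1 = (t + 1) + t by omega)] at hchoose
  push_cast at hchoose
  have h4 : 4 * ((t : ZMod p) + 1) = 1 := by
    have := congrArg (Nat.cast : ℕ → ZMod p) (show 4 * (t + 1) = p + 1 by omega)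
    push_cast [ZMod.natCast_self] at this
    linear_combination this
  linear_combination -4 * hD - 4 * hsum + 4 * (-1) ^ t * hchoose +
    (-1) ^ t * ((2 * t + 1).choose t : ZMod p) * h4

end Polynomial

namespace ZMod

variable {p : ℕ} [Fact p.Prime] {n : ℕ}

theorem sum_centralBinom_mul_catalan_mul_pow (hn : 2 * n + 1 = p) (y : ZMod p) :
    16 * y * ∑ k ∈ range (n + 1), ((2 * k).choose k * catalan k : ZMod p) * y ^ k =
      2 * (chooseSqAntideriv (ZMod p) n).eval (16 * y) := by
  rw [eval_chooseSqAntideriv, mul_sum, mul_sum]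
  refine sum_congr rfl fun k hk => ?_
  have hk : k ≤ n := by simpa [Nat.lt_succ_iff] using hk
  have h16 : (-4 : ZMod p) ^ k * (-4) ^ k = 16 ^ k := by rw [← mul_pow]; norm_num
  rw [natCast_centralBinom hn k hk, natCast_catalan hn hk]
  linear_combination 32 * y * (n.choose k * (n + 1).choose (k + 1) : ZMod p) * y ^ k * h16

theorem sum_mul_centralBinom_sq_mul_pow (hn : 2 * n + 1 = p) (y : ZMod p) :
    ∑ k ∈ range (n + 1), (k : ZMod p) * ((2 * k).choose k : ZMod p) ^ 2 * y ^ k =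
      16 * y * (derivative (chooseSqPoly (ZMod p) n)).eval (16 * y) := by
  rw [mul_eval_derivative_chooseSqPoly]
  refine sum_congr rfl fun k hk => ?_
  have h16 : (-4 : ZMod p) ^ k * (-4) ^ k = 16 ^ k := by rw [← mul_pow]; norm_num
  rw [natCast_centralBinom hn k (by simpa [Nat.lt_succ_iff] using hk)]
  linear_combination (k * n.choose k ^ 2 : ZMod p) * y ^ k * h16

end ZMod

/-- Theorem 1.3(i), congruence (1.5): for a prime `p ≡ 3 (mod 4)`, the five quantities
`∑_{k=0}^{(p-1)/2} C(2k,k) C_k / 8^k`, `-2 ∑ k C(2k,k)² / 8^k`,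
`-(1/2) ∑ C(2k,k) C_k / (-16)^k`, `4 ∑ k C(2k,k)² / (-16)^k` and
`((-1)^{(p+1)/4}/2) C((p+1)/2, (p+1)/4)` are all congruent modulo `p`. -/
theorem stmt_3 (p : ℕ) (hp : p.Prime) (hp4 : p % 4 = 3) :
    (∑ k ∈ Finset.range ((p - 1) / 2 + 1),
        (Nat.choose (2 * k) k * catalan k : ZMod p) * ((8 : ZMod p)⁻¹) ^ k) =
      -2 * ∑ k ∈ Finset.range ((p - 1) / 2 + 1),
        (k : ZMod p) * (Nat.choose (2 * k) k : ZMod p) ^ 2 * ((8 : ZMod p)⁻¹) ^ k ∧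
    (∑ k ∈ Finset.range ((p - 1) / 2 + 1),
        (Nat.choose (2 * k) k * catalan k : ZMod p) * ((8 : ZMod p)⁻¹) ^ k) =
      -(2 : ZMod p)⁻¹ * ∑ k ∈ Finset.range ((p - 1) / 2 + 1),
        (Nat.choose (2 * k) k * catalan k : ZMod p) * ((-16 : ZMod p)⁻¹) ^ k ∧
    (∑ k ∈ Finset.range ((p - 1) / 2 + 1),
        (Nat.choose (2 * k) k * catalan k : ZMod p) * ((8 : ZMod p)⁻¹) ^ k) =
      4 * ∑ k ∈ Finset.range ((p - 1) / 2 + 1),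
        (k : ZMod p) * (Nat.choose (2 * k) k : ZMod p) ^ 2 * ((-16 : ZMod p)⁻¹) ^ k ∧
    (∑ k ∈ Finset.range ((p - 1) / 2 + 1),
        (Nat.choose (2 * k) k * catalan k : ZMod p) * ((8 : ZMod p)⁻¹) ^ k) =
      (-1 : ZMod p) ^ ((p + 1) / 4) * (2 : ZMod p)⁻¹ *
        (Nat.choose ((p + 1) / 2) ((p + 1) / 4) : ZMod p) := by
  have := Fact.mk hp
  set n := (p - 1) / 2
  have hn : 2 * n + 1 = p := by omega
  obtain ⟨t, ht⟩ : ∃ t, n = 2 * t + 1 := ⟨p / 4, by omega⟩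
  have h2 : (2 : ZMod p) ≠ 0 := by
    exact_mod_cast CharP.natCast_ne_zero_of_lt (R := ZMod p) two_ne_zero (by omega)
  have h8 : 16 * (8 : ZMod p)⁻¹ = 2 := by
    have : (8 : ZMod p) ≠ 0 := by
      simpa [show (2 : ZMod p) ^ 3 = 8 by norm_num] using pow_ne_zero 3 h2
    field_simp
    norm_num
  have h16 : 16 * (-16 : ZMod p)⁻¹ = -1 := by
    have : (16 : ZMod p) ≠ 0 := by
      simpa [show (2 : ZMod p) ^ 4 = 16 by norm_num] using pow_ne_zero 4 h2
    field_simp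
  have hF : (chooseSqAntideriv (ZMod p) n).eval (-1) = -((-1) ^ t * n.choose t) := by
    rw [eval_neg_one_chooseSqAntideriv, show n / 2 = t by omega]
  have hS8 := ZMod.sum_centralBinom_mul_catalan_mul_pow hn 8⁻¹
  have hS16 := ZMod.sum_centralBinom_mul_catalan_mul_pow hn (-16)⁻¹
  rw [h8, eval_two_chooseSqAntideriv hn ⟨t, ht⟩, hF] at hS8
  rw [h16, hF] at hS16
  rw [ZMod.sum_mul_centralBinom_sq_mul_pow hn, ZMod.sum_mul_centralBinom_sq_mul_pow hn, h8, h16,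
    eval_two_derivative_chooseSqPoly hn ⟨t, ht⟩, mul_left_cancel₀ h2 hS8,
    show (p + 1) / 2 = n + 1 by omega, show (p + 1) / 4 = t + 1 by omega, Nat.choose_succ_succ,
    Nat.choose_symm_of_eq_add (show n = (t + 1) + t by omega)]
  have hD := four_mul_eval_neg_one_derivative_chooseSqPoly hn ht
  have hinv := mul_inv_cancel₀ h2
  refine ⟨by linear_combination hD, ?_, by linear_combination hD, ?_⟩
  · linear_combination -(2 : ZMod p)⁻¹ * hS16 + (-1 : ZMod p) ^ t * n.choose t * hinv
  · push_cast
    linear_combination (-1 : ZMod p) ^ t * n.choose t * hinv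
end

section
/- Let p be an odd prime and let d ∈ {0,1,...,(p-1)/2} with d ≡ (p+1)/2 (mod 2). Then Σ_{k=0}^{(p-1)/2} C(2k,k)·C(2k,k+d)·8^{-k} ≡ 0 (mod p). -/
/-!
Write `p = 2n + 1` and `n = d + a`; the parity condition says that `a` is odd. Only the
terms `k = d + m` with `0 ≤ m ≤ a` survive. From `(2k)! (n - k)! ≡ (-4)^k k! n! (mod p)`, the
summand for `k = d + m` is `2^m C(a, m) C(n + d, a - m)` times a factor independent of `m`,
and since `n + d = p - 1 - a`, we have `C(n + d, j) ≡ (-1)^j C(a + j, a)`. The resulting sum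
`∑ C(a, m) 2^m (-1)^(a-m) C(2a - m, a)` is the coefficient of `X^a` in
`((2 - (X + 1)) (X + 1))^a = (1 - X²)^a`, which vanishes because `a` is odd.
-/

open Finset Polynomial Nat

theorem Polynomial.coeff_one_sub_X_sq_pow_self {R : Type*} [CommRing R] (a : ℕ) :
    ((1 - X ^ 2 : R[X]) ^ a).coeff a =
      ∑ x ∈ antidiagonal a, (a.choose x.1 * 2 ^ x.1 * (-1) ^ x.2 * (a + x.2).choose a : R) := by
  have h : (1 - X ^ 2 : R[X]) ^ a = ∑ x ∈ antidiagonal a,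
      C (a.choose x.1 * 2 ^ x.1 * (-1) ^ x.2 : R) * (X + 1) ^ (a + x.2) := by
    rw [show (1 - X ^ 2 : R[X]) = (2 + -(X + 1)) * (X + 1) by ring, mul_pow,
      (Commute.all _ _).add_pow', sum_mul]
    refine sum_congr rfl fun x _ => ?_
    rw [neg_pow, nsmul_eq_mul, pow_add]
    simp only [map_mul, map_pow, map_neg, map_one, map_natCast, map_ofNat]
    ring
  simp only [h, finsetSum_coeff, coeff_C_mul, coeff_X_add_one_pow]

theorem Polynomial.coeff_one_sub_X_sq_pow_self_of_odd {R : Type*} [CommRing R] {a : ℕ}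
    (ha : Odd a) : ((1 - X ^ 2 : R[X]) ^ a).coeff a = 0 := by
  rw [show (1 - X ^ 2 : R[X]) ^ a = expand R 2 ((1 - X) ^ a) by simp, coeff_expand two_pos,
    if_neg ha.not_two_dvd_nat]

theorem descFactorial_eq_neg_one_pow_mul_ascFactorial {R : Type*} [CommRing R] {N a j : ℕ}
    (h : ((N + a + 1 : ℕ) : R) = 0) (hj : j ≤ N) :
    (N.descFactorial j : R) = (-1) ^ j * (a + 1).ascFactorial j := by
  rw [descFactorial_eq_prod_range, ascFactorial_eq_prod_range, cast_prod, cast_prod,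
    show (-1 : R) ^ j = ∏ _i ∈ range j, (-1 : R) by simp, ← prod_mul_distrib]
  refine prod_congr rfl fun i hi => ?_
  rw [show N + a + 1 = (N - i) + (a + 1 + i) by have := mem_range.1 hi; omega, cast_add] at h
  linear_combination h

theorem ZMod.natCast_factorial_ne_zero {p : ℕ} [Fact p.Prime] {n : ℕ} (hn : n < p) :
    (n ! : ZMod p) ≠ 0 := by
  rw [Ne, ZMod.natCast_eq_zero_iff, (Fact.out : p.Prime).dvd_factorial]
  omega

theorem ZMod.natCast_add_choose {p : ℕ} [Fact p.Prime] {a b : ℕ} (h : a + b < p) :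
    ((a + b).choose a : ZMod p) = (a + b)! / (a ! * b !) := by
  rw [eq_div_iff (mul_ne_zero (natCast_factorial_ne_zero (by omega))
    (natCast_factorial_ne_zero (by omega))), ← mul_assoc, choose_symm_add]
  have := congrArg (Nat.cast : ℕ → ZMod p) (add_choose_mul_factorial_mul_factorial a b)
  push_cast at this ⊢
  exact this

theorem ZMod.natCast_choose_eq_neg_one_pow_mul_choose {p : ℕ} [Fact p.Prime] {N a j : ℕ}
    (h : N + a + 1 = p) (hj : j ≤ N) :
    (N.choose j : ZMod p) = (-1) ^ j * (a + j).choose a := by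
  have hfac := descFactorial_eq_neg_one_pow_mul_ascFactorial (R := ZMod p)
    (by rw [h, ZMod.natCast_self]) hj
  rw [descFactorial_eq_factorial_mul_choose, ascFactorial_eq_factorial_mul_choose,
    ← choose_symm_add] at hfac
  push_cast at hfac
  apply mul_left_cancel₀ (natCast_factorial_ne_zero (p := p) (n := j) (by omega))
  linear_combination hfac

theorem factorial_two_mul_mul_factorial {R : Type*} [CommRing R] {k r : ℕ}
    (h : ((2 * (k + r) + 1 : ℕ) : R) = 0) :
    ((2 * k)! * r ! : R) = (-4) ^ k * k ! * (k + r)! := by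
  induction k generalizing r with
  | zero => simp
  | succ k ih =>
    have ih := ih (r := r + 1)
      (by rwa [show 2 * (k + (r + 1)) + 1 = 2 * (k + 1 + r) + 1 by ring])
    have h2k : (2 * k + 1 : R) = -2 * (r + 1) := by push_cast at h; linear_combination h
    rw [show 2 * (k + 1) = 2 * k + 1 + 1 by ring, show k + 1 + r = k + (r + 1) by ring,
      factorial_succ, factorial_succ, factorial_succ k]
    rw [factorial_succ r] at ih
    push_cast at ih ⊢
    linear_combination (2 * (k : R) + 2) * (2 * k)! * r ! * h2k - 4 * (k + 1) * ih

theorem ZMod.choose_two_mul_mul_choose_two_mul_mul_inv_eight_pow {p : ℕ} [Fact p.Prime]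
    {d m r : ℕ} (hp : 2 * (d + m + r) + 1 = p) :
    ((2 * (d + m)).choose (d + m) * (2 * (d + m)).choose (d + m + d) : ZMod p) * 8⁻¹ ^ (d + m) *
        ((m + r)! * (m + r + 2 * d)!) =
      2 ^ d * (d + m + r)! ^ 2 * (2 ^ m * (m + r).choose m * (m + r + 2 * d).choose r) := by
  have h2 : (2 : ZMod p) ≠ 0 := Ring.two_ne_zero (by rw [ZMod.ringChar_zmod_n]; omega)
  have h4 : (-4 : ZMod p) ≠ 0 := by
    rw [show (-4 : ZMod p) = -2 ^ 2 by norm_num]; exact neg_ne_zero.2 (pow_ne_zero 2 h2)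
  have h8 : (8 : ZMod p) ≠ 0 := by
    rw [show (8 : ZMod p) = 2 ^ 3 by norm_num]; exact pow_ne_zero 3 h2
  have hr : (r ! : ZMod p) ≠ 0 := natCast_factorial_ne_zero (by omega)
  have hm : (m ! : ZMod p) ≠ 0 := natCast_factorial_ne_zero (by omega)
  have hk : ((d + m)! : ZMod p) ≠ 0 := natCast_factorial_ne_zero (by omega)
  have hm2d : ((m + 2 * d)! : ZMod p) ≠ 0 := natCast_factorial_ne_zero (by omega)
  have hpow : (8⁻¹ : ZMod p) ^ (d + m) = 2 ^ d * 2 ^ m / ((-4) ^ (d + m)) ^ 2 := by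
    rw [eq_div_iff (pow_ne_zero _ (pow_ne_zero _ h4)), ← pow_mul, mul_comm (d + m), pow_mul,
      ← mul_pow, ← pow_add, show (-4 : ZMod p) ^ 2 = 8 * 2 by norm_num,
      inv_mul_cancel_left₀ h8]
  have hcentral : ((2 * (d + m))! : ZMod p) = (-4) ^ (d + m) * (d + m)! * (d + m + r)! / r ! := by
    rw [eq_div_iff hr]
    exact factorial_two_mul_mul_factorial (by rw [hp, ZMod.natCast_self])
  have c1 : ((2 * (d + m)).choose (d + m) : ZMod p) =
      (2 * (d + m))! / ((d + m)! * (d + m)!) := by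
    rw [two_mul]; exact natCast_add_choose (by omega)
  have c2 : ((2 * (d + m)).choose (d + m + d) : ZMod p) =
      (2 * (d + m))! / ((m + 2 * d)! * m !) := by
    rw [show 2 * (d + m) = m + 2 * d + m by ring, show d + m + d = m + 2 * d by ring]
    exact natCast_add_choose (by omega)
  have c3 : ((m + r + 2 * d).choose r : ZMod p) = (m + r + 2 * d)! / (r ! * (m + 2 * d)!) := by
    rw [show m + r + 2 * d = r + (m + 2 * d) by ring]; exact natCast_add_choose (by omega)
  rw [c1, c2, c3, natCast_add_choose (by omega), hcentral, hpow]
  field_simp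

/-- Theorem 1.3(ii), congruence (1.7): for an odd prime `p` and `d ∈ {0, ..., (p-1)/2}`
with `d ≡ (p+1)/2 (mod 2)`, we have
`∑_{k=0}^{(p-1)/2} C(2k,k) C(2k,k+d) / 8^k ≡ 0 (mod p)`. -/
theorem stmt_5 (p : ℕ) (hp : p.Prime) (hodd : Odd p) (d : ℕ) (hd : d ≤ (p - 1) / 2)
    (hpar : d % 2 = ((p + 1) / 2) % 2) :
    (∑ k ∈ Finset.range ((p - 1) / 2 + 1),
        (Nat.choose (2 * k) k * Nat.choose (2 * k) (k + d) : ZMod p) *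
          ((8 : ZMod p)⁻¹) ^ k) = 0 := by
  have := Fact.mk hp
  obtain ⟨n, hn⟩ := hodd
  obtain ⟨a, rfl⟩ : ∃ a, n = d + a := ⟨n - d, by omega⟩
  have ha : Odd a := by rw [Nat.odd_iff]; omega
  rw [show (p - 1) / 2 + 1 = d + (a + 1) by omega, sum_range_add,
    sum_eq_zero (s := range d) fun k hk => ?vanish, zero_add]
  case vanish =>
    rw [choose_eq_zero_of_lt (show 2 * k < k + d by have := mem_range.1 hk; omega)]
    simp
  have hc : (a ! * (a + 2 * d)! : ZMod p) ≠ 0 :=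
    mul_ne_zero (ZMod.natCast_factorial_ne_zero (by omega))
      (ZMod.natCast_factorial_ne_zero (by omega))
  refine (mul_right_injective₀ hc).eq_iff.1 ?_
  rw [mul_zero, mul_sum]
  calc _ = ∑ m ∈ range (a + 1), 2 ^ d * ((d + a)! : ZMod p) ^ 2 *
          (a.choose m * 2 ^ m * (-1) ^ (a - m) * (a + (a - m)).choose a) := by
        refine sum_congr rfl fun m hm => ?_
        obtain ⟨r, rfl⟩ := Nat.exists_eq_add_of_le (mem_range_succ_iff.1 hm)
        rw [Nat.add_sub_cancel_left, mul_comm, ← add_assoc,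
          ZMod.choose_two_mul_mul_choose_two_mul_mul_inv_eight_pow (d := d) (by omega),
          ZMod.natCast_choose_eq_neg_one_pow_mul_choose (N := m + r + 2 * d) (a := m + r) (j := r)
            (by omega) (by omega)]
        ring
    _ = 2 ^ d * (d + a)! ^ 2 * ((1 - X ^ 2 : (ZMod p)[X]) ^ a).coeff a := by
        rw [coeff_one_sub_X_sq_pow_self, Nat.sum_antidiagonal_eq_sum_range_succ_mk, mul_sum]
    _ = 0 := by rw [coeff_one_sub_X_sq_pow_self_of_odd ha, mul_zero]
end

section
/- Let p > 3 be a prime. Then for every p-adic integer x, p² divides Σ_{k=0}^{p-1} C(4k,2k)·C(2k,k)·64^{-k}·(x^k − (-2/p)·(1−x)^k) in the ring of p-adic integers, where (-2/p) is the Legendre symbol. -/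
/-!
Write `A k = C(4k,2k) C(2k,k) / 64^k` and `g = binomTransform p A`, the coefficients of
`∑_{k<p} A k (1 - x)^k`; the sum is then `∑_{m<p} (A m - (-2/p) g m) x^m`. The sequence `A` obeys
`16 (k+1)² A (k+1) = (4k+1)(4k+3) A k`, and a telescoping sum shows that `g` obeys the same
recurrence up to a multiple of `p²`, so `g k ≡ A k g 0 (mod p²)`. As `x ↦ 1 - x` is an involution,
so is the transform, and transforming back gives `A m ≡ g 0 g m (mod p²)`; in particular
`g 0² ≡ 1`. Modulo `p`, with `4n + 1 ≡ 0`, `A k ≡ (-1)^k C(n,k) C(n+k,k)`, a Legendre-type sum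
equal to `(-1)^n = (-2/p)`; so `g 0 ≡ (-2/p) (mod p)`, which lifts to `mod p²` because `g 0² ≡ 1`.
-/

open Finset Polynomial

namespace CentralBinomCongruence

variable {R : Type*} [CommRing R]

def binomTransform (n : ℕ) (a : ℕ → R) (m : ℕ) : R :=
  (-1) ^ m * ∑ j ∈ range n, (j.choose m : R) * a j

noncomputable def truncPoly (n : ℕ) (a : ℕ → R) : R[X] := ∑ j ∈ range n, C (a j) * X ^ j

lemma coeff_truncPoly {n m : ℕ} (a : ℕ → R) (hm : m < n) : (truncPoly n a).coeff m = a m := by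
  simp [truncPoly, finsetSum_coeff, hm]

lemma eval_truncPoly (n : ℕ) (a : ℕ → R) (x : R) :
    (truncPoly n a).eval x = ∑ j ∈ range n, a j * x ^ j := by
  simp [truncPoly, eval_finsetSum]

lemma one_sub_X_pow_eq_sum {j n : ℕ} (hj : j < n) :
    (1 - X : R[X]) ^ j = ∑ m ∈ range n, C ((-1) ^ m * (j.choose m : R)) * X ^ m := by
  rw [sub_eq_neg_add, add_pow]
  refine (sum_subset (range_subset_range.2 hj) fun m _ hm => ?_).trans (sum_congr rfl fun m _ => ?_)
  · rw [Nat.choose_eq_zero_of_lt (by simpa using hm)]; simp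
  · rw [neg_pow, one_pow, mul_one, map_mul, map_pow, map_neg, map_one, map_natCast]; ring

lemma truncPoly_comp_one_sub_X (n : ℕ) (a : ℕ → R) :
    (truncPoly n a).comp (1 - X) = truncPoly n (binomTransform n a) := by
  simp only [truncPoly, Polynomial.sum_comp, mul_comp, C_comp, X_pow_comp]
  rw [sum_congr rfl fun j hj => by rw [one_sub_X_pow_eq_sum (mem_range.1 hj), mul_sum], sum_comm]
  refine sum_congr rfl fun m _ => ?_
  simp only [binomTransform, map_mul, map_sum, sum_mul, mul_sum]
  refine sum_congr rfl fun j _ => ?_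
  simp only [map_pow, map_neg, map_one, map_natCast]; ring

lemma binomTransform_binomTransform {n m : ℕ} (a : ℕ → R) (hm : m < n) :
    binomTransform n (binomTransform n a) m = a m := by
  have h : truncPoly n (binomTransform n (binomTransform n a)) = truncPoly n a := by
    rw [← truncPoly_comp_one_sub_X, ← truncPoly_comp_one_sub_X, comp_assoc]
    simp
  rw [← coeff_truncPoly (binomTransform n (binomTransform n a)) hm, h, coeff_truncPoly a hm]

lemma sum_mul_one_sub_pow (n : ℕ) (a : ℕ → R) (x : R) :
    ∑ j ∈ range n, a j * (1 - x) ^ j = ∑ m ∈ range n, binomTransform n a m * x ^ m := by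
  simpa [eval_comp, eval_truncPoly] using congrArg (eval x) (truncPoly_comp_one_sub_X n a)

lemma binomTransform_sub_mul (n : ℕ) (a b : ℕ → R) (c : R) (m : ℕ) :
    binomTransform n b m - c * binomTransform n a m =
      binomTransform n (fun k => b k - c * a k) m := by
  simp only [binomTransform, mul_sub, sum_sub_distrib, mul_sum]
  congr 1; refine sum_congr rfl fun k _ => by ring

lemma dvd_binomTransform {d : R} {n : ℕ} {a : ℕ → R} (h : ∀ k < n, d ∣ a k) (m : ℕ) :
    d ∣ binomTransform n a m :=
  dvd_mul_of_dvd_right (dvd_sum fun k hk => dvd_mul_of_dvd_right (h k (mem_range.1 hk)) _) _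

lemma choose_succ_right_mul (j k : ℕ) :
    (j.choose (k + 1) : R) * (k + 1) = j.choose k * ((j : R) - k) := by
  rcases le_or_gt k j with hkj | hjk
  · exact_mod_cast congrArg (Nat.cast : ℕ → R) (Nat.choose_succ_right_eq j k) |>.trans
      (by push_cast [Nat.cast_sub hkj]; ring)
  · simp [Nat.choose_eq_zero_of_lt hjk, Nat.choose_eq_zero_of_lt (Nat.lt_succ_of_lt hjk)]

lemma mul_choose_pred (j k : ℕ) : (j : R) * (j - 1).choose k = (k + 1) * j.choose (k + 1) := by
  cases j with
  | zero => simp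
  | succ j =>
    rw [Nat.add_sub_cancel]
    exact_mod_cast
      congrArg (Nat.cast : ℕ → R) ((Nat.add_one_mul_choose_eq j k).trans (mul_comm _ _))

lemma quartic_choose_identity (j k : ℕ) :
    16 * ((k : R) + 1) ^ 2 * j.choose (k + 1) + (4 * k + 1) * (4 * k + 3) * j.choose k =
      (4 * j + 1) * (4 * j + 3) * j.choose k - 16 * (j : R) ^ 2 * (j - 1).choose k := by
  linear_combination 16 * (j : R) * mul_choose_pred (R := R) j k +
    16 * ((j : R) + k + 1) * choose_succ_right_mul (R := R) j k

lemma choose_four_mul_succ (k : ℕ) :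
    16 * ((k : R) + 1) ^ 2 * ((4 * (k + 1)).choose (2 * (k + 1)) * (2 * (k + 1)).choose (k + 1)) =
      64 * ((4 * k + 1) * (4 * k + 3)) * ((4 * k).choose (2 * k) * (2 * k).choose k) := by
  have step (n : ℕ) : ((n : R) + 1) * (n + 1).centralBinom = 2 * (2 * n + 1) * n.centralBinom := by
    exact_mod_cast congrArg (Nat.cast : ℕ → R) (Nat.succ_mul_centralBinom_succ n)
  rw [show 4 * (k + 1) = 2 * (2 * (k + 1)) by ring, show 4 * k = 2 * (2 * k) by ring]
  simp only [← Nat.centralBinom_eq_two_mul_choose]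
  rw [show 2 * (k + 1) = 2 * k + 1 + 1 by ring]
  have h1 := step k
  have h2 := step (2 * k + 1)
  have h3 := step (2 * k)
  push_cast at h2 h3
  linear_combination (16 * ((k : R) + 1) * (2 * k + 1 + 1).centralBinom) * h1
    + 16 * (2 * (k : R) + 1) * k.centralBinom * h2
    + 32 * (4 * (k : R) + 3) * k.centralBinom * h3

lemma binomTransform_quartic_recurrence {A : ℕ → R}
    (hA : ∀ j : ℕ, 16 * ((j : R) + 1) ^ 2 * A (j + 1) = (4 * j + 1) * (4 * j + 3) * A j) (n k : ℕ) :
    16 * ((k : R) + 1) ^ 2 * binomTransform n A (k + 1) -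
        (4 * k + 1) * (4 * k + 3) * binomTransform n A k =
      (-1) ^ (k + 1) * (16 * n ^ 2 * (n - 1).choose k * A n) := by
  set F : ℕ → R := fun j => 16 * (j : R) ^ 2 * (j - 1).choose k * A j with hF
  have hstep : ∀ j, (16 * ((k : R) + 1) ^ 2 * j.choose (k + 1) +
      (4 * k + 1) * (4 * k + 3) * j.choose k) * A j = F (j + 1) - F j := by
    intro j
    simp only [hF, Nat.add_sub_cancel, Nat.cast_add, Nat.cast_one, quartic_choose_identity]
    linear_combination -(j.choose k : R) * hA j
  have hsum : 16 * ((k : R) + 1) ^ 2 * ∑ j ∈ range n, (j.choose (k + 1) : R) * A j +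
      (4 * k + 1) * (4 * k + 3) * ∑ j ∈ range n, (j.choose k : R) * A j = F n := by
    rw [mul_sum, mul_sum, ← sum_add_distrib, ← sub_zero (F n), ← (show F 0 = 0 by simp [hF]),
      ← sum_range_sub]
    exact sum_congr rfl fun j _ => by rw [← hstep]; ring
  simp only [binomTransform]
  linear_combination (-1 : R) ^ (k + 1) * hsum

lemma dvd_sub_of_recurrence {d : R} {α β u v : ℕ → R} {n : ℕ}
    (hα : ∀ k, k + 1 < n → IsUnit (α k))
    (hu : ∀ k, k + 1 < n → d ∣ α k * u (k + 1) - β k * u k)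
    (hv : ∀ k, k + 1 < n → d ∣ α k * v (k + 1) - β k * v k) (h0 : d ∣ u 0 - v 0) :
    ∀ k < n, d ∣ u k - v k := by
  intro k hk
  induction k with
  | zero => exact h0
  | succ k ih =>
    have hdiff : α k * (u (k + 1) - v (k + 1)) =
        (α k * u (k + 1) - β k * u k) - (α k * v (k + 1) - β k * v k) + β k * (u k - v k) := by
      ring
    have hd : d ∣ α k * (u (k + 1) - v (k + 1)) := by
      rw [hdiff]
      exact dvd_add (dvd_sub (hu k hk) (hv k hk)) (dvd_mul_of_dvd_right (ih (by omega)) _)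
    exact (hα k hk).dvd_mul_left.1 hd

variable (R) in
noncomputable def hypergeomCoeff (k : ℕ) : R :=
  ((4 * k).choose (2 * k) : R) * ((2 * k).choose k : R) * Ring.inverse (64 : R) ^ k

@[simp] lemma hypergeomCoeff_zero : hypergeomCoeff R 0 = 1 := by simp [hypergeomCoeff]

lemma hypergeomCoeff_succ (h2 : IsUnit (2 : R)) (k : ℕ) :
    16 * ((k : R) + 1) ^ 2 * hypergeomCoeff R (k + 1) =
      (4 * k + 1) * (4 * k + 3) * hypergeomCoeff R k := by
  have h64 : (64 : R) * Ring.inverse 64 = 1 :=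
    Ring.mul_inverse_cancel _ (by simpa [show (2 : R) ^ 6 = 64 by norm_num] using h2.pow 6)
  unfold hypergeomCoeff
  linear_combination Ring.inverse (64 : R) ^ (k + 1) * choose_four_mul_succ (R := R) k +
    (4 * k + 1) * (4 * k + 3) * ((4 * k).choose (2 * k) : R) * ((2 * k).choose k : R) *
      Ring.inverse (64 : R) ^ k * h64

def legendreTerm (n k : ℕ) : ℤ := (-1) ^ k * n.choose k * (n + k).choose k

-- Chu–Vandermonde for `C(-1, n)`, using `C(-(n+1), k) = (-1)^k C(n+k, k)`.
lemma sum_legendreTerm (n : ℕ) : ∑ k ∈ range (n + 1), legendreTerm n k = (-1) ^ n := by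
  have hV := Ring.add_choose_eq (r := -((n : ℤ) + 1)) (s := (n : ℤ)) n (Commute.all _ _)
  rw [show -((n : ℤ) + 1) + n = -1 by ring, Finset.Nat.sum_antidiagonal_eq_sum_range_succ
    (fun i j => Ring.choose (-((n : ℤ) + 1)) i * Ring.choose (n : ℤ) j)] at hV
  simp only [Ring.choose_neg, Ring.choose_natCast, Units.smul_def, smul_eq_mul,
    Int.coe_negOnePow_natCast, add_sub_cancel_left, Nat.choose_self, Nat.cast_one, mul_one] at hV
  rw [hV]
  refine sum_congr rfl fun k hk => ?_
  rw [legendreTerm, show (n : ℤ) + 1 + k - 1 = ((n + k : ℕ) : ℤ) by push_cast; ring,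
    Ring.choose_natCast, Nat.choose_symm (Nat.lt_succ_iff.1 (mem_range.1 hk))]
  ring

lemma legendreTerm_succ (n k : ℕ) :
    16 * ((k : ℤ) + 1) ^ 2 * legendreTerm n (k + 1) - (4 * k + 1) * (4 * k + 3) * legendreTerm n k =
      -((4 * n + 1) * (4 * n + 3)) * legendreTerm n k := by
  have h1 := choose_succ_right_mul (R := ℤ) n k
  have h2 : ((n + k + 1 : ℕ) : ℤ) * (n + k).choose k = (n + k + 1).choose (k + 1) * (k + 1) := by
    exact_mod_cast Nat.add_one_mul_choose_eq (n + k) k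
  simp only [legendreTerm, ← add_assoc]
  push_cast at h2
  linear_combination (-16 * (-1 : ℤ) ^ k) * (((n + k + 1).choose (k + 1) : ℤ) * (k + 1) * h1 -
    (n.choose k : ℤ) * ((n : ℤ) - k) * h2)

section Padic

open PadicInt

variable {p : ℕ} [Fact p.Prime]

lemma isUnit_natCast_of_coprime {n : ℕ} (h : p.Coprime n) : IsUnit (n : ℤ_[p]) :=
  isUnit_iff.2 (norm_natCast_eq_one_iff.2 h)

lemma isUnit_two (hp2 : p ≠ 2) : IsUnit (2 : ℤ_[p]) := by
  simpa using isUnit_natCast_of_coprime (p := p) ((Nat.coprime_primes Fact.out Nat.prime_two).2 hp2)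

lemma isUnit_sixteen_mul_succ_sq (hp2 : p ≠ 2) {k : ℕ} (hk : k + 1 < p) :
    IsUnit (16 * ((k : ℤ_[p]) + 1) ^ 2) := by
  have hk1 : IsUnit ((k + 1 : ℕ) : ℤ_[p]) :=
    isUnit_natCast_of_coprime (Nat.coprime_of_lt_prime k.succ_ne_zero hk Fact.out)
  push_cast at hk1
  simpa [show (2 : ℤ_[p]) ^ 4 = 16 by norm_num] using ((isUnit_two hp2).pow 4).mul (hk1.pow 2)

lemma sq_dvd_sub_of_dvd_sub (hp2 : p ≠ 2) {y z : ℤ_[p]} (hz : IsUnit z)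
    (h1 : (p : ℤ_[p]) ∣ y - z) (h2 : (p : ℤ_[p]) ^ 2 ∣ y ^ 2 - z ^ 2) :
    (p : ℤ_[p]) ^ 2 ∣ y - z := by
  have hyz : IsUnit (y + z) := by
    by_contra hu
    have hp : (p : ℤ_[p]) ∣ 2 * z := by
      rw [show 2 * z = (y + z) - (y - z) by ring]
      exact dvd_sub ((norm_lt_one_iff_dvd _).1 (not_isUnit_iff.1 hu)) h1
    exact p_nonunit (isUnit_of_dvd_unit hp ((isUnit_two hp2).mul hz))
  rw [show y ^ 2 - z ^ 2 = (y - z) * (y + z) by ring] at h2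
  exact hyz.dvd_mul_right.1 h2

lemma dvd_sub_of_quartic_recurrence (hp2 : p ≠ 2) {d : ℤ_[p]} {u v : ℕ → ℤ_[p]}
    (hu : ∀ k, k + 1 < p →
      d ∣ 16 * ((k : ℤ_[p]) + 1) ^ 2 * u (k + 1) - (4 * k + 1) * (4 * k + 3) * u k)
    (hv : ∀ k, k + 1 < p →
      d ∣ 16 * ((k : ℤ_[p]) + 1) ^ 2 * v (k + 1) - (4 * k + 1) * (4 * k + 3) * v k)
    (h0 : d ∣ u 0 - v 0) : ∀ k < p, d ∣ u k - v k :=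
  dvd_sub_of_recurrence (fun _ hk => isUnit_sixteen_mul_succ_sq hp2 hk) hu hv h0

lemma sq_dvd_binomTransform_sub_mul (hp2 : p ≠ 2) :
    ∀ k < p, (p : ℤ_[p]) ^ 2 ∣ binomTransform p (hypergeomCoeff ℤ_[p]) k -
      hypergeomCoeff ℤ_[p] k * binomTransform p (hypergeomCoeff ℤ_[p]) 0 := by
  have hA := hypergeomCoeff_succ (isUnit_two hp2)
  refine dvd_sub_of_quartic_recurrence hp2 (fun k _ => ?_) (fun k _ => ?_) (by simp)
  · rw [binomTransform_quartic_recurrence hA]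
    exact Dvd.intro ((-1) ^ (k + 1) * 16 * (p - 1).choose k * hypergeomCoeff ℤ_[p] p) (by ring)
  · exact ⟨0, by linear_combination binomTransform p (hypergeomCoeff ℤ_[p]) 0 * hA k⟩

lemma sq_dvd_hypergeomCoeff_sub_mul (hp2 : p ≠ 2) {m : ℕ} (hm : m < p) :
    (p : ℤ_[p]) ^ 2 ∣ hypergeomCoeff ℤ_[p] m - binomTransform p (hypergeomCoeff ℤ_[p]) 0 *
      binomTransform p (hypergeomCoeff ℤ_[p]) m := by
  have h := binomTransform_sub_mul p (hypergeomCoeff ℤ_[p])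
    (binomTransform p (hypergeomCoeff ℤ_[p])) (binomTransform p (hypergeomCoeff ℤ_[p]) 0) m
  rw [binomTransform_binomTransform _ hm] at h
  rw [h]
  exact dvd_binomTransform (fun k hk => by
    simpa only [mul_comm] using sq_dvd_binomTransform_sub_mul hp2 k hk) m

lemma dvd_hypergeomCoeff_sub_legendreTerm (hp2 : p ≠ 2) {n : ℕ} (hn : p ∣ 4 * n + 1) :
    ∀ k < p, (p : ℤ_[p]) ∣ hypergeomCoeff ℤ_[p] k - legendreTerm n k := by
  obtain ⟨t, ht⟩ := hn
  have h4n : 4 * (n : ℤ_[p]) + 1 = p * t := by exact_mod_cast congrArg (Nat.cast : ℕ → ℤ_[p]) ht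
  refine dvd_sub_of_quartic_recurrence hp2 (fun k _ => ⟨0, ?_⟩)
    (fun k _ => ⟨-(t * (4 * n + 3) * legendreTerm n k), ?_⟩) (by simp [legendreTerm])
  · linear_combination hypergeomCoeff_succ (isUnit_two hp2) k
  · have h := congrArg (Int.cast : ℤ → ℤ_[p]) (legendreTerm_succ n k)
    push_cast at h
    linear_combination h - (4 * (n : ℤ_[p]) + 3) * legendreTerm n k * h4n

lemma dvd_binomTransform_zero_sub (hp2 : p ≠ 2) {n : ℕ} (hnp : n < p) (hn : p ∣ 4 * n + 1) :
    (p : ℤ_[p]) ∣ binomTransform p (hypergeomCoeff ℤ_[p]) 0 - (-1) ^ n := by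
  have hL : ∑ k ∈ range p, (legendreTerm n k : ℤ_[p]) = (-1) ^ n := by
    rw [← sum_subset (range_subset_range.2 hnp) fun k _ hk => ?_]
    · exact_mod_cast congrArg (Int.cast : ℤ → ℤ_[p]) (sum_legendreTerm n)
    · simp [legendreTerm, Nat.choose_eq_zero_of_lt (not_lt.1 (mt mem_range.2 hk))]
  rw [← hL, binomTransform]
  simpa [← sum_sub_distrib] using
    dvd_sum fun k hk => dvd_hypergeomCoeff_sub_legendreTerm hp2 hn k (mem_range.1 hk)

lemma exists_jacobiSym_neg_two_eq_neg_one_pow (hp2 : p ≠ 2) :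
    ∃ n < p, p ∣ 4 * n + 1 ∧ jacobiSym (-2) p = (-1) ^ n := by
  have hodd := (Fact.out : p.Prime).odd_of_ne_two hp2
  have hp2' : p % 2 = 1 := Nat.odd_iff.1 hodd
  rw [jacobiSym.at_neg_two hodd, ZMod.χ₈'_nat_eq_if_mod_eight, if_neg (by omega)]
  rcases (by omega : p % 8 = 1 ∨ p % 8 = 3 ∨ p % 8 = 5 ∨ p % 8 = 7) with h | h | h | h
  · refine ⟨2 * (p / 8), by omega, ⟨1, by omega⟩, ?_⟩
    simp [h, pow_mul]
  · refine ⟨6 * (p / 8) + 2, by omega, ⟨3, by omega⟩, ?_⟩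
    simp [h, pow_add, pow_mul]
  · refine ⟨2 * (p / 8) + 1, by omega, ⟨1, by omega⟩, ?_⟩
    simp [h, pow_add, pow_mul]
  · refine ⟨6 * (p / 8) + 5, by omega, ⟨3, by omega⟩, ?_⟩
    simp [h, pow_add, pow_mul]

lemma sq_dvd_binomTransform_zero_sub_jacobiSym (hp2 : p ≠ 2) :
    (p : ℤ_[p]) ^ 2 ∣ binomTransform p (hypergeomCoeff ℤ_[p]) 0 - (jacobiSym (-2) p : ℤ_[p]) := by
  obtain ⟨n, hnp, hn, hJ⟩ := exists_jacobiSym_neg_two_eq_neg_one_pow hp2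
  rw [hJ, Int.cast_pow, Int.cast_neg, Int.cast_one]
  refine sq_dvd_sub_of_dvd_sub hp2 (isUnit_neg_one.pow n)
    (dvd_binomTransform_zero_sub hp2 hnp hn) ?_
  have h := sq_dvd_hypergeomCoeff_sub_mul hp2 (m := 0) (by omega)
  rw [hypergeomCoeff_zero] at h
  convert h.neg_right using 1
  rw [← pow_mul, pow_mul', neg_one_sq, one_pow]
  ring

lemma sq_dvd_hypergeomCoeff_sub_jacobiSym_mul (hp2 : p ≠ 2) {m : ℕ} (hm : m < p) :
    (p : ℤ_[p]) ^ 2 ∣ hypergeomCoeff ℤ_[p] m -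
      (jacobiSym (-2) p : ℤ_[p]) * binomTransform p (hypergeomCoeff ℤ_[p]) m := by
  convert dvd_add (sq_dvd_hypergeomCoeff_sub_mul hp2 hm) (dvd_mul_of_dvd_left
    (sq_dvd_binomTransform_zero_sub_jacobiSym hp2) (binomTransform p (hypergeomCoeff ℤ_[p]) m))
    using 1
  ring

end Padic

end CentralBinomCongruence

open CentralBinomCongruence in
/-- Theorem 1.5, congruence (1.15): for a prime `p > 3` and every `p`-adic integer `x`,
`p²` divides `∑_{k=0}^{p-1} C(4k,2k) C(2k,k) 64^{-k} (x^k - (-2/p)(1-x)^k)` in `ℤ_p`. -/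
theorem stmt_10 (p : ℕ) [Fact p.Prime] (hp3 : 3 < p) (x : ℤ_[p]) :
    (p : ℤ_[p]) ^ 2 ∣
      ∑ k ∈ Finset.range p,
        (Nat.choose (4 * k) (2 * k) : ℤ_[p]) * (Nat.choose (2 * k) k : ℤ_[p]) *
          (Ring.inverse (64 : ℤ_[p])) ^ k *
            (x ^ k - ((jacobiSym (-2) p : ℤ) : ℤ_[p]) * (1 - x) ^ k) := by
  have hp2 : p ≠ 2 := by omega
  set J : ℤ_[p] := ((jacobiSym (-2) p : ℤ) : ℤ_[p])
  have hsum : ∑ k ∈ range p, hypergeomCoeff ℤ_[p] k * (x ^ k - J * (1 - x) ^ k) =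
      ∑ m ∈ range p,
        (hypergeomCoeff ℤ_[p] m - J * binomTransform p (hypergeomCoeff ℤ_[p]) m) * x ^ m := by
    simp only [mul_sub, sub_mul, sum_sub_distrib, mul_left_comm _ J, ← mul_sum, sum_mul_one_sub_pow,
      mul_assoc]
  exact hsum ▸ dvd_sum fun m hm => dvd_mul_of_dvd_left
    (sq_dvd_hypergeomCoeff_sub_jacobiSym_mul hp2 (mem_range.1 hm)) _
end
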